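/- arXiv:math/0101192 — 7 statements merged into one kernel-verified Lean document; each statement's English description precedes it below -/
import Mathlib

section
/- Let μ be a Radon measure on ℝ^d and fix α > 1 and β > α^d. Then for μ-almost every x ∈ ℝ^d there exists a sequence of (α,β)-doubling cubes Q_k centered at x with side lengths ℓ(Q_k) → 0 as k → ∞. -/
/-!
By Besicovitch's differentiation theorem, for `μ`-a.e. `x` the ratio
`volume (closedBall x r) / μ (closedBall x r)` stays bounded as `r → 0`. If no cube of side
`l ≤ l₀` centred at `x` were `(α, β)`-doubling, iterating `β μ(Q) < μ(αQ)` would give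
`μ(cube x (l₀ / α ^ k)) ≤ β ^ (-k) μ(cube x l₀)`, while the inscribed balls have volume
`≍ α ^ (-d k)`. Since `β > α ^ d`, the ratio would blow up.
-/

open MeasureTheory Metric Set ENNReal Filter

noncomputable section

/-- Closed axis-parallel cube centered at `c` with side length `l`. -/
def cube {d : ℕ} (c : EuclideanSpace ℝ (Fin d)) (l : ℝ) :
    Set (EuclideanSpace ℝ (Fin d)) := {y | ∀ i, |y i - c i| ≤ l / 2}

open scoped Topology

theorem closedBall_subset_cube {d : ℕ} (c : EuclideanSpace ℝ (Fin d)) (l : ℝ) :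
    closedBall c (l / 2) ⊆ cube c l := fun y hy i =>
  (PiLp.dist_apply_le y c i).trans hy

theorem isCompact_cube {d : ℕ} (c : EuclideanSpace ℝ (Fin d)) (l : ℝ) :
    IsCompact (cube c l) := by
  have hcube : cube c l =
      EuclideanSpace.equiv (Fin d) ℝ ⁻¹' univ.pi fun i => closedBall (c i) (l / 2) := by
    ext y
    simp [cube, Real.dist_eq]
  rw [hcube]
  exact (EuclideanSpace.equiv (Fin d) ℝ).toHomeomorph.isCompact_preimage.2
    (isCompact_univ_pi fun i => isCompact_closedBall _ _)

def IsDoublingCube {d : ℕ} (μ : Measure (EuclideanSpace ℝ (Fin d))) (α β : ℝ)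
    (x : EuclideanSpace ℝ (Fin d)) (l : ℝ) : Prop :=
  μ (cube x (α * l)) ≤ ENNReal.ofReal β * μ (cube x l)

theorem pow_mul_apply_div_pow_le {f : ℝ → ℝ≥0∞} {b : ℝ≥0∞} {α l₀ : ℝ} (hα : 1 ≤ α)
    (hl₀ : 0 < l₀) (hf : ∀ s, 0 < s → s ≤ l₀ → b * f s ≤ f (α * s)) (k : ℕ) :
    b ^ k * f (l₀ / α ^ k) ≤ f l₀ := by
  induction k with
  | zero => simp
  | succ k ih =>
    have hα₀ : 0 < α := by linarith
    have hscale : α * (l₀ / α ^ (k + 1)) = l₀ / α ^ k := by field_simp; ring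
    calc b ^ (k + 1) * f (l₀ / α ^ (k + 1)) = b ^ k * (b * f (l₀ / α ^ (k + 1))) := by ring
      _ ≤ b ^ k * f (α * (l₀ / α ^ (k + 1))) := by
        gcongr
        exact hf _ (by positivity) (div_le_self hl₀.le (one_le_pow₀ hα))
      _ = b ^ k * f (l₀ / α ^ k) := by rw [hscale]
      _ ≤ f l₀ := ih

theorem Besicovitch.ae_eventually_le_mul_measure_closedBall {E : Type*} [MetricSpace E]
    [MeasurableSpace E] [BorelSpace E] [SecondCountableTopology E] [HasBesicovitchCovering E]
    (μ ρ : Measure E) [IsLocallyFiniteMeasure μ] [IsLocallyFiniteMeasure ρ] :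
    ∀ᵐ x ∂μ, ∃ K < ∞, ∀ᶠ r in 𝓝[>] 0, ρ (closedBall x r) ≤ K * μ (closedBall x r) := by
  filter_upwards [Besicovitch.ae_tendsto_rnDeriv ρ μ, Measure.rnDeriv_lt_top ρ μ] with x hx hfin
  refine ⟨ρ.rnDeriv μ x + 1, add_lt_top.2 ⟨hfin, one_lt_top⟩, ?_⟩
  filter_upwards [hx.eventually (gt_mem_nhds (lt_add_right hfin.ne one_ne_zero))] with r hr
  exact (ENNReal.div_le_iff_le_mul (Or.inr (by simpa using hfin.ne)) (Or.inr (by simp))).1 hr.le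

theorem ae_frequently_isDoublingCube {d : ℕ} (μ : Measure (EuclideanSpace ℝ (Fin d)))
    [IsLocallyFiniteMeasure μ] {α β : ℝ} (hα : 1 < α) (hβ : α ^ d < β) :
    ∀ᵐ x ∂μ, ∃ᶠ l in 𝓝[>] 0, IsDoublingCube μ α β x l := by
  filter_upwards [Besicovitch.ae_eventually_le_mul_measure_closedBall μ volume]
    with x ⟨K, hK, hvol⟩
  by_contra hnot
  rw [not_frequently] at hnot
  obtain ⟨u, hu, hsmall⟩ := (nhdsGT_basis 0).eventually_iff.1 (hvol.and hnot)
  have hα₀ : 0 < α := by linarith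
  have hβ₀ : 0 < β := (pow_pos hα₀ d).trans hβ
  have hu₂ : 0 < u / 2 := by positivity
  have hdecay (k : ℕ) :
      ENNReal.ofReal β ^ k * μ (cube x (u / 2 / α ^ k)) ≤ μ (cube x (u / 2)) :=
    pow_mul_apply_div_pow_le hα.le hu₂
      (fun s hs hsu => (not_le.1 (hsmall ⟨hs, by linarith⟩).2).le) k
  set q := β / α ^ d
  set ω := volume (ball (0 : EuclideanSpace ℝ (Fin d)) 1)
  have hbound (k : ℕ) : ENNReal.ofReal ((u / 4) ^ d * q ^ k) * ω ≤ K * μ (cube x (u / 2)) := by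
    have hr : 0 < u / 2 / α ^ k / 2 := by positivity
    have hr_lt : u / 2 / α ^ k / 2 < u := by
      have := div_le_self hu₂.le (one_le_pow₀ hα.le (n := k))
      linarith
    calc _ = ENNReal.ofReal β ^ k * volume (closedBall x (u / 2 / α ^ k / 2)) := by
          rw [Measure.addHaar_closedBall _ _ hr.le, finrank_euclideanSpace_fin, ← mul_assoc,
            ← ENNReal.ofReal_pow hβ₀.le, ← ENNReal.ofReal_mul (by positivity)]
          congr 2
          field_simp [q]
          ring
      _ ≤ ENNReal.ofReal β ^ k * (K * μ (closedBall x (u / 2 / α ^ k / 2))) := by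
          gcongr
          exact (hsmall ⟨hr, hr_lt⟩).1
      _ ≤ ENNReal.ofReal β ^ k * (K * μ (cube x (u / 2 / α ^ k))) := by
          gcongr
          exact closedBall_subset_cube _ _
      _ = K * (ENNReal.ofReal β ^ k * μ (cube x (u / 2 / α ^ k))) := by ring
      _ ≤ K * μ (cube x (u / 2)) := by gcongr; exact hdecay k
  have hq : 1 < q := (one_lt_div (by positivity)).2 hβ
  have htend : Tendsto (fun k : ℕ => ENNReal.ofReal ((u / 4) ^ d * q ^ k) * ω) atTop (𝓝 ∞) := by
    have := ENNReal.Tendsto.mul_const (b := ω) (ENNReal.tendsto_ofReal_atTop.comp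
      ((tendsto_pow_atTop_atTop_of_one_lt hq).const_mul_atTop (by positivity : 0 < (u / 4) ^ d)))
      (Or.inl top_ne_zero)
    rwa [top_mul (measure_ball_pos _ _ one_pos).ne'] at this
  have hfin : K * μ (cube x (u / 2)) < ∞ := mul_lt_top hK (isCompact_cube x _).measure_lt_top
  obtain ⟨k, hk⟩ := (htend.eventually (lt_mem_nhds hfin)).exists
  exact (hbound k).not_gt hk

theorem stmt1 {d : ℕ} (μ : Measure (EuclideanSpace ℝ (Fin d))) [Measure.Regular μ]
    (α β : ℝ) (hα : 1 < α) (hβ : α ^ (d : ℝ) < β) :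
    ∀ᵐ x ∂μ, ∃ l : ℕ → ℝ, (∀ k, 0 < l k) ∧ Tendsto l atTop (nhds 0) ∧
      ∀ k, μ (cube x (α * l k)) ≤ ENNReal.ofReal β * μ (cube x (l k)) := by
  rw [Real.rpow_natCast] at hβ
  filter_upwards [ae_frequently_isDoublingCube μ hα hβ] with x hx
  obtain ⟨l, hl_tendsto, hl⟩ :=
    frequently_iff_seq_forall.1 (hx.and_eventually self_mem_nhdsWithin)
  exact ⟨l, fun k => (hl k).2, tendsto_nhds_of_tendsto_nhdsWithin hl_tendsto, fun k => (hl k).1⟩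
end
end

section
/- Let μ be a Radon measure on ℝ^d with μ(B(x,r)) ≤ C₀ r^n, and fix α = 2, β > 2^n. There is a constant C₃ = C₃(C₀,n,d,β) such that: if Q ⊂ R are concentric cubes and no cube of the form 2^k Q with k ≥ 0 and Q ⊂ 2^k Q ⊂ R is (2,β)-doubling, then δ(Q,R) ≤ C₃, where δ(Q,R) = ∫_{R∖Q} |x−z_Q|^{−n} dμ(x). -/
/-!
Let `2^(K+1) Q` be the first dyadic dilation of `Q` that contains `R`. Since none of the cubes
`2^k Q ⊆ R` is doubling, `μ(2^(k+1) Q) ≤ β^(k-K) μ(2^(K+1) Q) ≤ β^(k-K) C₀ (√d 2^K ℓ(Q))^n`,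
while on the dyadic annulus `2^(k+1) Q \ 2^k Q` the kernel `|x - z|^(-n)` is at most
`(2^k ℓ(Q) / 2)^(-n)`. Each annulus thus contributes at most `C₀ (2√d)^n (2^n/β)^(K-k)`, and as
`2^n < β` these contributions sum to a bounded geometric series.
-/

open MeasureTheory Metric Set ENNReal

noncomputable section

theorem Set.diff_subset_biUnion_diff_succ {α : Type*} (s : ℕ → Set α) (m : ℕ) :
    s m \ s 0 ⊆ ⋃ k ∈ Finset.range m, s (k + 1) \ s k := by
  induction m with
  | zero => simp
  | succ m ih =>
    rw [Finset.range_add_one, Finset.set_biUnion_insert]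
    exact (sdiff_triangle _ (s m) _).trans (union_subset_union_right _ ih)

theorem pow_mul_le_of_forall_mul_le_succ {M : Type*} [Monoid M] [Preorder M] [MulLeftMono M]
    {s : ℕ → M} {c : M} {k m : ℕ} (hkm : k ≤ m) (h : ∀ i, k ≤ i → i < m → c * s i ≤ s (i + 1)) :
    c ^ (m - k) * s k ≤ s m := by
  induction m, hkm using Nat.le_induction with
  | base => simp
  | succ m hkm ih =>
    calc c ^ (m + 1 - k) * s k = c * (c ^ (m - k) * s k) := by
          rw [Nat.sub_add_comm hkm, pow_succ', mul_assoc]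
      _ ≤ c * s m := by gcongr; exact ih fun i hki him => h i hki (by omega)
      _ ≤ s (m + 1) := h m hkm (by omega)

theorem Real.rpow_neg_mul_mul_rpow {a b : ℝ} (ha : 0 < a) (hb : 0 ≤ b) (n : ℝ) :
    a ^ (-n) * (b * a) ^ n = b ^ n := by
  rw [Real.mul_rpow hb ha.le, Real.rpow_neg ha.le, mul_left_comm,
    inv_mul_cancel₀ (Real.rpow_pos_of_pos ha n).ne', mul_one]

theorem MeasureTheory.lintegral_biUnion_finset_le {ι α : Type*} [MeasurableSpace α]
    {μ : Measure α} (s : Finset ι) (t : ι → Set α) (f : α → ℝ≥0∞) :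
    ∫⁻ x in ⋃ i ∈ s, t i, f x ∂μ ≤ ∑ i ∈ s, ∫⁻ x in t i, f x ∂μ := by
  classical
  induction s using Finset.induction_on with
  | empty => simp
  | insert i s hi ih =>
    rw [Finset.set_biUnion_insert, Finset.sum_insert hi]
    exact (lintegral_union_le _ _ _).trans (by gcongr)

theorem sum_range_mul_pow_sub_le {A r : ℝ} (hA : 0 ≤ A) (hr₀ : 0 ≤ r) (hr₁ : r < 1) (K : ℕ) :
    ∑ k ∈ Finset.range (K + 1), A * r ^ (K - k) ≤ A / (1 - r) := by
  have hreflect : ∑ k ∈ Finset.range (K + 1), r ^ (K - k) = ∑ k ∈ Finset.range (K + 1), r ^ k := by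
    simpa using Finset.sum_range_reflect (fun j => r ^ j) (K + 1)
  rw [← Finset.mul_sum, hreflect, div_eq_mul_one_div]
  gcongr
  simpa using geom_sum_Ico_le_of_lt_one (m := 0) (n := K + 1) hr₀ hr₁

section Cube

variable {d : ℕ}

theorem cube_mono (z : EuclideanSpace ℝ (Fin d)) {l l' : ℝ} (h : l ≤ l') : cube z l ⊆ cube z l' :=
  fun _ hx i => (hx i).trans (by linarith)

theorem isClosed_cube (z : EuclideanSpace ℝ (Fin d)) (l : ℝ) : IsClosed (cube z l) := by
  simp only [cube, ofPred_forall]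
  exact isClosed_iInter fun i => isClosed_le (by fun_prop) continuous_const

theorem lt_dist_of_notMem_cube {x z : EuclideanSpace ℝ (Fin d)} {l : ℝ} (h : x ∉ cube z l) :
    l / 2 < dist x z := by
  simp only [cube, mem_ofPred_eq, not_forall, not_le] at h
  obtain ⟨i, hi⟩ := h
  exact hi.trans_le (PiLp.dist_apply_le x z i)

theorem cube_subset_closedBall (z : EuclideanSpace ℝ (Fin d)) {l : ℝ} (hl : 0 ≤ l) :
    cube z l ⊆ closedBall z (√d * l / 2) := by
  intro x hx
  rw [mem_closedBall, EuclideanSpace.dist_eq]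
  calc √(∑ i, dist (x i) (z i) ^ 2) ≤ √(∑ _i : Fin d, (l / 2) ^ 2) := by
        gcongr with i
        rw [Real.dist_eq]
        exact hx i
    _ = √d * l / 2 := by
        rw [Finset.sum_const, Finset.card_univ, Fintype.card_fin, nsmul_eq_mul,
          Real.sqrt_mul (Nat.cast_nonneg d), Real.sqrt_sq (by linarith)]
        ring

theorem diff_cube_subset_biUnion_dyadic_annuli (z : EuclideanSpace ℝ (Fin d)) {l L : ℝ} {K : ℕ}
    (hL : L ≤ 2 ^ (K + 1) * l) :
    cube z L \ cube z l ⊆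
      ⋃ k ∈ Finset.range (K + 1), cube z (2 ^ (k + 1) * l) \ cube z (2 ^ k * l) :=
  (sdiff_subset_sdiff_left (cube_mono z hL)).trans
    (by simpa using Set.diff_subset_biUnion_diff_succ (fun k => cube z (2 ^ k * l)) (K + 1))

theorem setLIntegral_rpow_neg_dist_le (μ : Measure (EuclideanSpace ℝ (Fin d)))
    (z : EuclideanSpace ℝ (Fin d)) {n l L : ℝ} (hn : 0 ≤ n) (hl : 0 < l) :
    ∫⁻ x in cube z L \ cube z l, ENNReal.ofReal (dist x z ^ (-n)) ∂μ ≤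
      ENNReal.ofReal ((l / 2) ^ (-n)) * μ (cube z L) := by
  have hmeas := (isClosed_cube z L).measurableSet.diff (isClosed_cube z l).measurableSet
  calc ∫⁻ x in cube z L \ cube z l, ENNReal.ofReal (dist x z ^ (-n)) ∂μ
      ≤ ∫⁻ _ in cube z L \ cube z l, ENNReal.ofReal ((l / 2) ^ (-n)) ∂μ :=
        setLIntegral_mono' hmeas fun x hx => ENNReal.ofReal_le_ofReal <|
          Real.rpow_le_rpow_of_nonpos (by positivity) (lt_dist_of_notMem_cube hx.2).le
            (neg_nonpos.2 hn)
    _ ≤ ENNReal.ofReal ((l / 2) ^ (-n)) * μ (cube z L) := by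
        rw [setLIntegral_const]
        gcongr
        exact sdiff_subset

theorem measure_cube_le_of_measure_closedBall_le {μ : Measure (EuclideanSpace ℝ (Fin d))} {C₀ n : ℝ}
    (hd : 0 < d)
    (hμ : ∀ (x : EuclideanSpace ℝ (Fin d)) (r : ℝ), 0 < r →
      μ (closedBall x r) ≤ ENNReal.ofReal (C₀ * r ^ n))
    (z : EuclideanSpace ℝ (Fin d)) {l : ℝ} (hl : 0 < l) :
    μ (cube z l) ≤ ENNReal.ofReal (C₀ * (√d * l / 2) ^ n) := by
  have : 0 < √d := Real.sqrt_pos.2 (Nat.cast_pos.2 hd)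
  exact (measure_mono (cube_subset_closedBall z hl.le)).trans (hμ z _ (by positivity))

theorem setLIntegral_dyadic_annulus_le {μ : Measure (EuclideanSpace ℝ (Fin d))} {C₀ n β : ℝ}
    (hd : 0 < d) (hn : 0 ≤ n) (hβ : 0 < β)
    (hμ : ∀ (x : EuclideanSpace ℝ (Fin d)) (r : ℝ), 0 < r →
      μ (closedBall x r) ≤ ENNReal.ofReal (C₀ * r ^ n))
    (z : EuclideanSpace ℝ (Fin d)) {l : ℝ} (hl : 0 < l) {k K : ℕ} (hkK : k ≤ K)
    (hgrow : ∀ i, k < i → i ≤ K →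
      ENNReal.ofReal β * μ (cube z (2 ^ i * l)) ≤ μ (cube z (2 ^ (i + 1) * l))) :
    ∫⁻ x in cube z (2 ^ (k + 1) * l) \ cube z (2 ^ k * l), ENNReal.ofReal (dist x z ^ (-n)) ∂μ ≤
      ENNReal.ofReal (C₀ * (2 * √d) ^ n * (2 ^ n / β) ^ (K - k)) := by
  have hchain : ENNReal.ofReal β ^ (K - k) * μ (cube z (2 ^ (k + 1) * l)) ≤
      μ (cube z (2 ^ (K + 1) * l)) := by
    simpa using pow_mul_le_of_forall_mul_le_succ (s := fun i => μ (cube z (2 ^ i * l)))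
      (by omega : k + 1 ≤ K + 1) fun i hki hiK => hgrow i (by omega) (by omega)
  have htop :=
    measure_cube_le_of_measure_closedBall_le hd hμ z (by positivity : 0 < 2 ^ (K + 1) * l)
  have hβK : 0 < β ^ (K - k) := pow_pos hβ _
  set a : ℝ := 2 ^ k * l / 2
  have ha : 0 < a := by positivity
  have hsplit : √d * (2 ^ (K + 1) * l) / 2 = 2 * √d * 2 ^ (K - k) * a := by
    rw [show K + 1 = (K - k) + k + 1 by omega]
    ring
  calc ∫⁻ x in cube z (2 ^ (k + 1) * l) \ cube z (2 ^ k * l), ENNReal.ofReal (dist x z ^ (-n)) ∂μ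
      ≤ ENNReal.ofReal (a ^ (-n)) * μ (cube z (2 ^ (k + 1) * l)) :=
        setLIntegral_rpow_neg_dist_le μ z hn (by positivity)
    _ ≤ ENNReal.ofReal (a ^ (-n)) *
          (ENNReal.ofReal (C₀ * (√d * (2 ^ (K + 1) * l) / 2) ^ n) /
            ENNReal.ofReal (β ^ (K - k))) := by
        gcongr
        rw [ENNReal.le_div_iff_mul_le (by simp [hβK]) (by simp), mul_comm,
          ENNReal.ofReal_pow hβ.le]
        exact hchain.trans htop
    _ = ENNReal.ofReal (C₀ * (a ^ (-n) * (2 * √d * 2 ^ (K - k) * a) ^ n) / β ^ (K - k)) := by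
        rw [hsplit, ← mul_div_assoc, ← ENNReal.ofReal_mul (by positivity),
          mul_left_comm (a ^ (-n)), ENNReal.ofReal_div_of_pos hβK]
    _ = ENNReal.ofReal (C₀ * (2 * √d) ^ n * (2 ^ n / β) ^ (K - k)) := by
        rw [Real.rpow_neg_mul_mul_rpow ha (by positivity),
          Real.mul_rpow (by positivity) (by positivity),
          ← Real.rpow_pow_comm zero_le_two, div_pow]
        ring_nf

end Cube

theorem stmt4 {d : ℕ} (n C₀ β : ℝ) (hn : 0 < n) (hnd : n ≤ d) (hC₀ : 0 < C₀)
    (hβ : (2 : ℝ) ^ n < β) :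
    ∃ C₃ : ℝ, 0 < C₃ ∧
      ∀ (μ : Measure (EuclideanSpace ℝ (Fin d))), Measure.Regular μ →
        (∀ (x : EuclideanSpace ℝ (Fin d)) (r : ℝ), 0 < r →
          μ (Metric.closedBall x r) ≤ ENNReal.ofReal (C₀ * r ^ n)) →
        ∀ (z : EuclideanSpace ℝ (Fin d)) (lQ lR : ℝ), 0 < lQ → lQ ≤ lR →
          (∀ k : ℕ, (2 : ℝ) ^ k * lQ ≤ lR →
            ¬ (μ (cube z (2 * ((2 : ℝ) ^ k * lQ))) ≤
                ENNReal.ofReal β * μ (cube z ((2 : ℝ) ^ k * lQ)))) →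
          (∫⁻ x in cube z lR \ cube z lQ, ENNReal.ofReal (dist x z ^ (-n)) ∂μ)
            ≤ ENNReal.ofReal C₃ := by
  have hd : 0 < d := Nat.cast_pos.1 (hn.trans_le hnd)
  have hβ₀ : 0 < β := (Real.rpow_pos_of_pos two_pos n).trans hβ
  have hr : 2 ^ n / β < 1 := (div_lt_one hβ₀).2 hβ
  refine ⟨C₀ * (2 * √d) ^ n / (1 - 2 ^ n / β), ?_, ?_⟩
  · have : 0 < √d := Real.sqrt_pos.2 (Nat.cast_pos.2 hd)
    have : 0 < 1 - 2 ^ n / β := by linarith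
    positivity
  intro μ _ hμ z lQ lR hlQ hlQR hnd
  obtain ⟨K, hK, hK₁⟩ := exists_nat_pow_near ((one_le_div hlQ).2 hlQR) one_lt_two
  have hQK : 2 ^ K * lQ ≤ lR := (le_div_iff₀ hlQ).1 hK
  have hRK : lR ≤ 2 ^ (K + 1) * lQ := (div_le_iff₀ hlQ).1 hK₁.le
  have hgrow : ∀ i ≤ K,
      ENNReal.ofReal β * μ (cube z (2 ^ i * lQ)) ≤ μ (cube z (2 ^ (i + 1) * lQ)) := by
    intro i hi
    have hiR : (2 : ℝ) ^ i * lQ ≤ lR := le_trans (by gcongr; norm_num) hQK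
    rw [pow_succ', mul_assoc]
    exact (not_le.1 (hnd i hiR)).le
  calc ∫⁻ x in cube z lR \ cube z lQ, ENNReal.ofReal (dist x z ^ (-n)) ∂μ
      ≤ ∑ k ∈ Finset.range (K + 1), ∫⁻ x in cube z (2 ^ (k + 1) * lQ) \ cube z (2 ^ k * lQ),
          ENNReal.ofReal (dist x z ^ (-n)) ∂μ :=
        (lintegral_mono_set (diff_cube_subset_biUnion_dyadic_annuli z hRK)).trans
          (lintegral_biUnion_finset_le _ _ _)
    _ ≤ ∑ k ∈ Finset.range (K + 1), ENNReal.ofReal (C₀ * (2 * √d) ^ n * (2 ^ n / β) ^ (K - k)) :=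
        Finset.sum_le_sum fun k hk => setLIntegral_dyadic_annulus_le hd hn.le hβ₀ hμ z hlQ
          (Finset.mem_range_succ_iff.1 hk) fun i _ hi => hgrow i hi
    _ = ENNReal.ofReal (∑ k ∈ Finset.range (K + 1), C₀ * (2 * √d) ^ n * (2 ^ n / β) ^ (K - k)) :=
        (ENNReal.ofReal_sum_of_nonneg fun k _ => by positivity).symm
    _ ≤ ENNReal.ofReal (C₀ * (2 * √d) ^ n / (1 - 2 ^ n / β)) :=
        ENNReal.ofReal_le_ofReal (sum_range_mul_pow_sub_le (by positivity) (by positivity) hr K)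
end
end

section
/- Let μ be a Radon measure on ℝ^d with μ(B(x,r)) ≤ C₀ r^n. There is a constant ε₀ = ε₀(C₀,n,d) such that for all cubes P ⊂ Q ⊂ R with centers z_P, z_Q respectively, one has |δ(P,R) − (δ(P,Q) + δ(Q,R))| ≤ ε₀, where δ(A,B) = ∫_{B_A∖A} |x−z_A|^{−n} dμ(x) and B_A is the smallest cube concentric with A containing both A and B. -/
/-!
Cubes are closed balls for the sup-distance `ρ`, and for cubes `A ⊆ B` the side of `A_B` is
`ℓ(B) + 2ρ(z_B, z_A)`. Hence `δ(P,R) - δ(P,Q)` integrates `|x - z_P|^{-n}` over the shell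
`P_R ∖ P_Q`, while `δ(Q,R)` integrates `|x - z_Q|^{-n}` over `Q_R ∖ Q`. The radii of these two
shells differ by at most `a = ρ(z_P, z_Q) ≤ ℓ(Q)/2`, so their symmetric difference is covered by
three shells of ratio `3`, each of kernel mass `≲ C₀` by the growth condition. On their
intersection `|x - z_Q| ≳ ℓ(Q)`, the mean value theorem gives
`||x - z_P|^{-n} - |x - z_Q|^{-n}| ≲ a |x - z_Q|^{-n-1}`, and a dyadic decomposition gives
`∫_{|x - z| ≥ r} |x - z|^{-n-1} dμ ≲ C₀ / r`.
-/

open MeasureTheory Metric Set ENNReal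

noncomputable section

/-- Side length of the smallest cube concentric with the cube of center `z` and side `l`
containing that cube together with the set `B`. -/
def encSide {d : ℕ} (z : EuclideanSpace ℝ (Fin d)) (l : ℝ)
    (B : Set (EuclideanSpace ℝ (Fin d))) : ℝ :=
  sInf {t : ℝ | l ≤ t ∧ B ⊆ cube z t}

/-- δ(Q,B) = ∫_{Q_B ∖ Q} |x−z_Q|^{−n} dμ(x), where Q is the cube of center `z`
and side `l`, and Q_B is the smallest concentric cube containing Q and B. -/
def cdelta {d : ℕ} (μ : Measure (EuclideanSpace ℝ (Fin d))) (n : ℝ)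
    (z : EuclideanSpace ℝ (Fin d)) (l : ℝ) (B : Set (EuclideanSpace ℝ (Fin d))) : ℝ :=
  ∫ x in cube z (encSide z l B) \ cube z l, dist x z ^ (-n) ∂μ

theorem add_dist_le_of_closedBall_subset_closedBall {F : Type*} [NormedAddCommGroup F]
    [NormedSpace ℝ F] [Nontrivial F] {x y : F} {r s : ℝ} (hr : 0 ≤ r)
    (h : closedBall x r ⊆ closedBall y s) : r + dist x y ≤ s := by
  obtain ⟨v, hv, hray⟩ : ∃ v : F, ‖v‖ = r ∧ SameRay ℝ (x - y) v := by
    rcases eq_or_ne x y with rfl | hne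
    · obtain ⟨v, hv⟩ := exists_norm_eq F hr
      exact ⟨v, hv, by simp⟩
    · refine ⟨(r / ‖x - y‖) • (x - y), ?_, SameRay.sameRay_nonneg_smul_right _ (by positivity)⟩
      rw [norm_smul, Real.norm_of_nonneg (by positivity),
        div_mul_cancel₀ _ (norm_ne_zero_iff.2 (sub_ne_zero.2 hne))]
  have hmem : x + v ∈ closedBall y s := h (by simp [hv])
  rw [mem_closedBall, dist_eq_norm, add_sub_right_comm, hray.norm_add, hv, ← dist_eq_norm] at hmem
  linarith

theorem abs_rpow_neg_sub_rpow_neg_le {n a u v : ℝ} (hn : 0 ≤ n) (ha : 0 < a) (hu : a ≤ u)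
    (hv : a ≤ v) : |u ^ (-n) - v ^ (-n)| ≤ n * a ^ (-(n + 1)) * |u - v| := by
  have hderiv : ∀ x ∈ Ici a,
      HasDerivWithinAt (fun y : ℝ => y ^ (-n)) (-n * x ^ (-n - 1)) (Ici a) x :=
    fun x hx => (Real.hasDerivAt_rpow_const (Or.inl (ha.trans_le hx).ne')).hasDerivWithinAt
  have hbound : ∀ x ∈ Ici a, ‖-n * x ^ (-n - 1)‖ ≤ n * a ^ (-(n + 1)) := by
    intro x hx
    rw [norm_mul, norm_neg, Real.norm_of_nonneg hn,
      Real.norm_of_nonneg (Real.rpow_nonneg (ha.le.trans hx) _), show -n - 1 = -(n + 1) by ring]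
    exact mul_le_mul_of_nonneg_left (Real.rpow_le_rpow_of_nonpos ha hx (by linarith)) hn
  simpa using (convex_Ici a).norm_image_sub_le_of_norm_hasDerivWithin_le hderiv hbound hv hu

section Integral

variable {α : Type*} [MeasurableSpace α] {μ : Measure α}

theorem setIntegral_le_of_setLIntegral_ofReal_le {f : α → ℝ} {s : Set α} {C : ℝ}
    (hf : 0 ≤ f) (hfm : AEStronglyMeasurable f (μ.restrict s)) (hC : 0 ≤ C)
    (h : ∫⁻ x in s, ENNReal.ofReal (f x) ∂μ ≤ ENNReal.ofReal C) : ∫ x in s, f x ∂μ ≤ C := by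
  rw [integral_eq_lintegral_of_nonneg_ae (ae_of_all _ hf) hfm]
  exact ENNReal.toReal_le_of_le_ofReal hC h

theorem setIntegral_sdiff_sub_setIntegral_sdiff {f : α → ℝ} {A₁ A₂ A₃ : Set α} (h₁₂ : A₁ ⊆ A₂)
    (h₂₃ : A₂ ⊆ A₃) (hA₁ : MeasurableSet A₁) (hA₂ : MeasurableSet A₂)
    (hf : IntegrableOn f (A₃ \ A₁) μ) :
    ∫ x in A₃ \ A₁, f x ∂μ - ∫ x in A₂ \ A₁, f x ∂μ = ∫ x in A₃ \ A₂, f x ∂μ := by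
  rw [← setIntegral_sdiff (hA₂.diff hA₁) hf (sdiff_subset_sdiff_left h₂₃),
    sdiff_sdiff_sdiff_cancel_right h₁₂]

theorem abs_setIntegral_sub_setIntegral_le {f g : α → ℝ} {A B : Set α} (hA : MeasurableSet A)
    (hB : MeasurableSet B) (hf : 0 ≤ f) (hg : 0 ≤ g) (hfA : IntegrableOn f A μ)
    (hgB : IntegrableOn g B μ) :
    |∫ x in A, f x ∂μ - ∫ x in B, g x ∂μ| ≤
      ∫ x in A ∩ B, |f x - g x| ∂μ + ∫ x in A \ B, f x ∂μ + ∫ x in B \ A, g x ∂μ := by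
  rw [← integral_inter_add_sdiff hB hfA, ← integral_inter_add_sdiff hA hgB, inter_comm B A]
  have hfg : |∫ x in A ∩ B, f x ∂μ - ∫ x in A ∩ B, g x ∂μ| ≤ ∫ x in A ∩ B, |f x - g x| ∂μ := by
    rw [← integral_sub (hfA.mono_set inter_subset_left) (hgB.mono_set inter_subset_right)]
    exact abs_integral_le_integral_abs
  have hf' : 0 ≤ ∫ x in A \ B, f x ∂μ := integral_nonneg hf
  have hg' : 0 ≤ ∫ x in B \ A, g x ∂μ := integral_nonneg hg
  rw [abs_le] at hfg ⊢
  constructor <;> linarith [hfg.1, hfg.2]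

end Integral

section Growth

variable {X : Type*} [PseudoMetricSpace X]

theorem abs_dist_rpow_neg_sub_le {n κ : ℝ} (hn : 0 ≤ n) (hκ : 0 ≤ κ) {x p q : X}
    (hxq : 0 < dist x q) (hpq : dist p q ≤ κ * dist x p) :
    |dist x p ^ (-n) - dist x q ^ (-n)| ≤
      n * (1 + κ) ^ (n + 1) * dist p q * dist x q ^ (-(n + 1)) := by
  have hκ1 : 0 < 1 + κ := by linarith
  have hxp : dist x q / (1 + κ) ≤ dist x p :=
    (div_le_iff₀' hκ1).2 (by linarith [dist_triangle x p q])
  have hdiff : |dist x p - dist x q| ≤ dist p q := by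
    simpa [dist_comm] using abs_dist_sub_le p q x
  calc |dist x p ^ (-n) - dist x q ^ (-n)|
      ≤ n * (dist x q / (1 + κ)) ^ (-(n + 1)) * |dist x p - dist x q| :=
        abs_rpow_neg_sub_rpow_neg_le hn (div_pos hxq hκ1) hxp (div_le_self hxq.le (by linarith))
    _ = n * (1 + κ) ^ (n + 1) * |dist x p - dist x q| * dist x q ^ (-(n + 1)) := by
        rw [Real.div_rpow hxq.le hκ1.le, Real.rpow_neg hκ1.le, div_inv_eq_mul]
        ring
    _ ≤ n * (1 + κ) ^ (n + 1) * dist p q * dist x q ^ (-(n + 1)) := by gcongr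

variable [MeasurableSpace X]

def HasPolynomialGrowth (μ : Measure X) (n C₀ : ℝ) : Prop :=
  ∀ (x : X) (r : ℝ), 0 < r → μ (closedBall x r) ≤ ENNReal.ofReal (C₀ * r ^ n)

variable {μ : Measure X} {n C₀ : ℝ}

theorem setLIntegral_rpow_neg_dist_le_s5 (hμ : HasPolynomialGrowth μ n C₀) {m r R : ℝ} (hm : 0 ≤ m)
    (hr : 0 < r) {s : Set X} {z : X} (hs : ∀ x ∈ s, r ≤ dist x z ∧ dist x z ≤ R) :
    ∫⁻ x in s, ENNReal.ofReal (dist x z ^ (-m)) ∂μ ≤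
      ENNReal.ofReal (r ^ (-m) * (C₀ * R ^ n)) := by
  rcases s.eq_empty_or_nonempty with rfl | ⟨x₀, hx₀⟩
  · simp
  have hR : 0 < R := hr.trans_le ((hs x₀ hx₀).1.trans (hs x₀ hx₀).2)
  calc ∫⁻ x in s, ENNReal.ofReal (dist x z ^ (-m)) ∂μ
      ≤ ∫⁻ _ in s, ENNReal.ofReal (r ^ (-m)) ∂μ :=
        setLIntegral_mono measurable_const fun x hx => ENNReal.ofReal_le_ofReal
          (Real.rpow_le_rpow_of_nonpos hr (hs x hx).1 (neg_nonpos.2 hm))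
    _ = ENNReal.ofReal (r ^ (-m)) * μ s := setLIntegral_const _ _
    _ ≤ ENNReal.ofReal (r ^ (-m)) * ENNReal.ofReal (C₀ * R ^ n) := by
        gcongr
        exact (measure_mono fun x hx => mem_closedBall.2 (hs x hx).2).trans (hμ z R hR)
    _ = ENNReal.ofReal (r ^ (-m) * (C₀ * R ^ n)) := (ENNReal.ofReal_mul (by positivity)).symm

theorem setLIntegral_rpow_neg_dist_le_of_le_mul (hμ : HasPolynomialGrowth μ n C₀) (hn : 0 ≤ n)
    {r c : ℝ} (hr : 0 < r) (hc : 0 ≤ c) {s : Set X} {z : X}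
    (hs : ∀ x ∈ s, r ≤ dist x z ∧ dist x z ≤ c * r) :
    ∫⁻ x in s, ENNReal.ofReal (dist x z ^ (-n)) ∂μ ≤ ENNReal.ofReal (C₀ * c ^ n) := by
  convert setLIntegral_rpow_neg_dist_le_s5 hμ hn hr hs using 2
  rw [Real.mul_rpow hc hr.le, Real.rpow_neg hr.le]
  field_simp [(Real.rpow_pos_of_pos hr n).ne']

theorem setLIntegral_rpow_neg_dist_tail_le (hμ : HasPolynomialGrowth μ n C₀) (hn : 0 ≤ n)
    (hC₀ : 0 ≤ C₀) {ρ : ℝ} (hρ : 0 < ρ) (z : X) :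
    ∫⁻ x in {x | ρ ≤ dist x z}, ENNReal.ofReal (dist x z ^ (-(n + 1))) ∂μ ≤
      ENNReal.ofReal (2 ^ (n + 1) * C₀ / ρ) := by
  set shell : ℕ → Set X := fun k => {x | 2 ^ k * ρ ≤ dist x z ∧ dist x z ≤ 2 * (2 ^ k * ρ)}
  have hcover : {x | ρ ≤ dist x z} ⊆ ⋃ k, shell k := by
    intro x hx
    obtain ⟨k, hk, hk'⟩ := exists_nat_pow_near ((one_le_div hρ).2 hx) one_lt_two
    refine mem_iUnion.2 ⟨k, (le_div_iff₀ hρ).1 hk, ?_⟩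
    have := (div_le_iff₀ hρ).1 hk'.le
    rw [pow_succ] at this
    linarith
  have hshell : ∀ k : ℕ, ∫⁻ x in shell k, ENNReal.ofReal (dist x z ^ (-(n + 1))) ∂μ ≤
      ENNReal.ofReal (2 ^ n * C₀ / ρ) * 2⁻¹ ^ k := by
    intro k
    have ht : 0 < (2 : ℝ) ^ k * ρ := by positivity
    refine (setLIntegral_rpow_neg_dist_le_s5 hμ (by linarith) ht fun x hx => hx).trans_eq ?_
    rw [← ENNReal.ofReal_ofNat 2, ← ENNReal.ofReal_inv_of_pos two_pos,
      ← ENNReal.ofReal_pow (by norm_num), ← ENNReal.ofReal_mul (by positivity)]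
    congr 1
    rw [Real.mul_rpow two_pos.le ht.le, Real.rpow_neg ht.le, Real.rpow_add ht, Real.rpow_one,
      inv_pow]
    field_simp
  calc ∫⁻ x in {x | ρ ≤ dist x z}, ENNReal.ofReal (dist x z ^ (-(n + 1))) ∂μ
      ≤ ∑' k, ∫⁻ x in shell k, ENNReal.ofReal (dist x z ^ (-(n + 1))) ∂μ :=
        (lintegral_mono_set hcover).trans (lintegral_iUnion_le _ _)
    _ ≤ ∑' k : ℕ, ENNReal.ofReal (2 ^ n * C₀ / ρ) * 2⁻¹ ^ k := ENNReal.tsum_le_tsum hshell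
    _ = ENNReal.ofReal (2 ^ (n + 1) * C₀ / ρ) := by
        rw [ENNReal.tsum_mul_left, ENNReal.tsum_geometric, ENNReal.one_sub_inv_two, inv_inv,
          ← ENNReal.ofReal_ofNat 2, ← ENNReal.ofReal_mul (by positivity),
          Real.rpow_add_one two_ne_zero]
        ring_nf

variable [OpensMeasurableSpace X]

theorem measurable_dist_rpow (z : X) (m : ℝ) : Measurable fun x => dist x z ^ m :=
  (continuous_id.dist continuous_const).measurable.pow_const m

theorem integrableOn_rpow_neg_dist (hμ : HasPolynomialGrowth μ n C₀) {m r R : ℝ} (hm : 0 ≤ m)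
    (hr : 0 < r) {s : Set X} {z : X} (hs : ∀ x ∈ s, r ≤ dist x z ∧ dist x z ≤ R) :
    IntegrableOn (fun x => dist x z ^ (-m)) s μ :=
  (lintegral_ofReal_ne_top_iff_integrable (measurable_dist_rpow z _).aestronglyMeasurable
    (ae_of_all _ fun _ => by positivity)).1
    ((setLIntegral_rpow_neg_dist_le_s5 hμ hm hr hs).trans_lt ofReal_lt_top).ne

theorem setLIntegral_abs_dist_rpow_neg_sub_le (hμ : HasPolynomialGrowth μ n C₀) (hn : 0 ≤ n)
    (hC₀ : 0 ≤ C₀) {κ ρ : ℝ} (hκ : 0 ≤ κ) (hρ : 0 < ρ) {p q : X} {s : Set X}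
    (hs : ∀ x ∈ s, dist p q ≤ κ * dist x p ∧ ρ ≤ dist x q) :
    ∫⁻ x in s, ENNReal.ofReal |dist x p ^ (-n) - dist x q ^ (-n)| ∂μ ≤
      ENNReal.ofReal (n * (1 + κ) ^ (n + 1) * (dist p q / ρ) * (2 ^ (n + 1) * C₀)) := by
  set c := n * (1 + κ) ^ (n + 1) * dist p q
  have hc : 0 ≤ c := by positivity
  calc ∫⁻ x in s, ENNReal.ofReal |dist x p ^ (-n) - dist x q ^ (-n)| ∂μ
      ≤ ∫⁻ x in s, ENNReal.ofReal c * ENNReal.ofReal (dist x q ^ (-(n + 1))) ∂μ := by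
        refine setLIntegral_mono ((measurable_dist_rpow q _).ennreal_ofReal.const_mul _)
          fun x hx => ?_
        rw [← ENNReal.ofReal_mul hc]
        exact ENNReal.ofReal_le_ofReal
          (abs_dist_rpow_neg_sub_le hn hκ (hρ.trans_le (hs x hx).2) (hs x hx).1)
    _ = ENNReal.ofReal c * ∫⁻ x in s, ENNReal.ofReal (dist x q ^ (-(n + 1))) ∂μ :=
        lintegral_const_mul' _ _ ofReal_ne_top
    _ ≤ ENNReal.ofReal c * ENNReal.ofReal (2 ^ (n + 1) * C₀ / ρ) := by
        gcongr
        exact (lintegral_mono_set fun x hx => (hs x hx).2).trans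
          (setLIntegral_rpow_neg_dist_tail_le hμ hn hC₀ hρ q)
    _ = ENNReal.ofReal (n * (1 + κ) ^ (n + 1) * (dist p q / ρ) * (2 ^ (n + 1) * C₀)) := by
        rw [← ENNReal.ofReal_mul hc]
        congr 1
        ring

end Growth

/-- The constant `ε₀`: one term for the intersection of the two shells being compared, and three
shells of ratio `3` covering their symmetric difference. -/
def defectBound (d : ℕ) (n C₀ : ℝ) : ℝ :=
  n * (1 + √d) ^ (n + 1) * √d * (2 ^ (n + 1) * C₀) + 3 * (C₀ * (√d * 3) ^ n)

section Euclidean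

variable {d : ℕ}

local notation "E" => EuclideanSpace ℝ (Fin d)

theorem measurableSet_cube (z : E) (l : ℝ) : MeasurableSet (cube z l) := by
  rw [cube, ofPred_forall]
  exact MeasurableSet.iInter fun i => measurableSet_le (by fun_prop) measurable_const

theorem dist_ofLp_le_dist (x y : E) : dist x.ofLp y.ofLp ≤ dist x y :=
  (dist_pi_le_iff dist_nonneg).2 fun i => PiLp.dist_apply_le x y i

theorem dist_le_sqrt_mul_dist_ofLp (x y : E) : dist x y ≤ √d * dist x.ofLp y.ofLp := by
  simpa [Real.sqrt_eq_rpow] using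
    (PiLp.antilipschitzWith_ofLp 2 fun _ : Fin d => ℝ).le_mul_dist x y

variable {μ : Measure (EuclideanSpace ℝ (Fin d))} {n C₀ : ℝ}

theorem setLIntegral_rpow_neg_dist_le_of_dist_ofLp (hμ : HasPolynomialGrowth μ n C₀)
    (hn : 0 ≤ n) {r c : ℝ} (hr : 0 < r) (hc : 0 ≤ c) {s : Set E} {z : E}
    (hs : ∀ x ∈ s, r ≤ dist x.ofLp z.ofLp ∧ dist x.ofLp z.ofLp ≤ c * r) :
    ∫⁻ x in s, ENNReal.ofReal (dist x z ^ (-n)) ∂μ ≤ ENNReal.ofReal (C₀ * (√d * c) ^ n) := by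
  refine setLIntegral_rpow_neg_dist_le_of_le_mul hμ hn hr (by positivity) fun x hx => ⟨?_, ?_⟩
  · exact (hs x hx).1.trans (dist_ofLp_le_dist x z)
  · rw [mul_assoc]
    exact (dist_le_sqrt_mul_dist_ofLp x z).trans (by gcongr; exact (hs x hx).2)

variable [Nonempty (Fin d)]

/-- `x.ofLp : Fin d → ℝ` carries the sup metric, so cubes are closed sup-balls. -/
theorem mem_cube_iff {x z : E} {l : ℝ} : x ∈ cube z l ↔ dist x.ofLp z.ofLp ≤ l / 2 := by
  simp [dist_pi_le_iff', cube, Real.dist_eq]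

theorem cube_eq_preimage_closedBall (z : E) (l : ℝ) :
    cube z l = WithLp.ofLp ⁻¹' closedBall z.ofLp (l / 2) := by
  ext x
  exact mem_cube_iff

theorem cube_subset_cube_iff {c z : E} {L t : ℝ} (hL : 0 ≤ L) :
    cube c L ⊆ cube z t ↔ L + 2 * dist c.ofLp z.ofLp ≤ t := by
  rw [cube_eq_preimage_closedBall, cube_eq_preimage_closedBall,
    preimage_subset_preimage_iff (by simp [(WithLp.ofLp_surjective 2).range_eq])]
  constructor
  · intro h
    linarith [add_dist_le_of_closedBall_subset_closedBall (by linarith) h]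
  · intro h
    exact closedBall_subset_closedBall' (by linarith)

theorem encSide_cube {z c : E} {l L : ℝ} (hl : 0 < l) (h : cube z l ⊆ cube c L) :
    encSide z l (cube c L) = L + 2 * dist c.ofLp z.ofLp := by
  have hlL := (cube_subset_cube_iff hl.le).1 h
  have hL : 0 ≤ L := by linarith [dist_nonneg (x := z.ofLp) (y := c.ofLp)]
  have : {t | l ≤ t ∧ cube c L ⊆ cube z t} = Ici (L + 2 * dist c.ofLp z.ofLp) := by
    ext t
    rw [mem_ofPred_eq, mem_Ici, cube_subset_cube_iff hL, and_iff_right_iff_imp]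
    intro ht
    linarith [dist_nonneg (x := c.ofLp) (y := z.ofLp), dist_nonneg (x := z.ofLp) (y := c.ofLp)]
  rw [encSide, this, csInf_Ici]

theorem cdelta_cube {z c : E} {l L : ℝ} (hl : 0 < l) (h : cube z l ⊆ cube c L) :
    cdelta μ n z l (cube c L) =
      ∫ x in cube z (L + 2 * dist c.ofLp z.ofLp) \ cube z l, dist x z ^ (-n) ∂μ := by
  rw [cdelta, encSide_cube hl h]

theorem integrableOn_cube_sdiff_cube (hμ : HasPolynomialGrowth μ n C₀) (hn : 0 ≤ n) (z : E)
    {l : ℝ} (hl : 0 < l) (L : ℝ) :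
    IntegrableOn (fun x => dist x z ^ (-n)) (cube z L \ cube z l) μ := by
  refine integrableOn_rpow_neg_dist hμ hn (half_pos hl) (R := √d * (L / 2)) fun x hx => ?_
  rw [mem_sdiff, mem_cube_iff, mem_cube_iff, not_le] at hx
  exact ⟨hx.2.le.trans (dist_ofLp_le_dist x z),
    (dist_le_sqrt_mul_dist_ofLp x z).trans (by gcongr; exact hx.1)⟩

theorem cdelta_sub_cdelta (hμ : HasPolynomialGrowth μ n C₀) (hn : 0 ≤ n) {zP zQ zR : E}
    {lP lQ lR : ℝ} (hlP : 0 < lP) (hlQ : 0 < lQ) (hPQ : cube zP lP ⊆ cube zQ lQ)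
    (hQR : cube zQ lQ ⊆ cube zR lR) :
    cdelta μ n zP lP (cube zR lR) - cdelta μ n zP lP (cube zQ lQ) =
      ∫ x in cube zP (lR + 2 * dist zR.ofLp zP.ofLp) \ cube zP (lQ + 2 * dist zQ.ofLp zP.ofLp),
        dist x zP ^ (-n) ∂μ := by
  have hPQ' := (cube_subset_cube_iff hlP.le).1 hPQ
  have hQR' := (cube_subset_cube_iff hlQ.le).1 hQR
  have hmono {u v : ℝ} (huv : u ≤ v) : cube zP u ⊆ cube zP v :=
    fun y hy i => (hy i).trans (by linarith)
  rw [cdelta_cube hlP (hPQ.trans hQR), cdelta_cube hlP hPQ]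
  refine setIntegral_sdiff_sub_setIntegral_sdiff (hmono ?_) (hmono ?_) (measurableSet_cube _ _)
    (measurableSet_cube _ _) (integrableOn_cube_sdiff_cube hμ hn zP hlP _)
  · linarith [dist_nonneg (x := zQ.ofLp) (y := zP.ofLp), dist_nonneg (x := zP.ofLp) (y := zQ.ofLp)]
  · linarith [dist_triangle zQ.ofLp zR.ofLp zP.ofLp]

variable {p q : EuclideanSpace ℝ (Fin d)} {l S T : ℝ}

theorem setIntegral_inter_abs_rpow_neg_dist_sub_le (hμ : HasPolynomialGrowth μ n C₀) (hn : 0 ≤ n)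
    (hC₀ : 0 ≤ C₀) (hl : 0 < l) (ha : 2 * dist q.ofLp p.ofLp ≤ l) :
    ∫ x in (cube p S \ cube p (l + 2 * dist q.ofLp p.ofLp)) ∩ (cube q T \ cube q l),
      |dist x p ^ (-n) - dist x q ^ (-n)| ∂μ ≤
        n * (1 + √d) ^ (n + 1) * √d * (2 ^ (n + 1) * C₀) := by
  refine setIntegral_le_of_setLIntegral_ofReal_le (fun x => abs_nonneg _)
    ((measurable_dist_rpow p _).sub (measurable_dist_rpow q _)).abs.aestronglyMeasurable
    (by positivity) ((setLIntegral_abs_dist_rpow_neg_sub_le hμ hn hC₀ (Real.sqrt_nonneg d)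
      (half_pos hl) fun x hx => ?_).trans (ENNReal.ofReal_le_ofReal ?_))
  · simp only [mem_inter_iff, mem_sdiff, mem_cube_iff, not_le] at hx
    refine ⟨(dist_le_sqrt_mul_dist_ofLp p q).trans ?_, ?_⟩
    · rw [dist_comm p.ofLp]
      exact mul_le_mul_of_nonneg_left (by linarith [dist_ofLp_le_dist x p]) (Real.sqrt_nonneg d)
    · linarith [dist_ofLp_le_dist x q]
  · gcongr
    rw [div_le_iff₀ (half_pos hl), dist_comm]
    exact (dist_le_sqrt_mul_dist_ofLp q p).trans (by gcongr; linarith)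

theorem setIntegral_sdiff_rpow_neg_dist_le_left (hμ : HasPolynomialGrowth μ n C₀) (hn : 0 ≤ n)
    (hC₀ : 0 ≤ C₀) (hl : 0 < l) (hST : S ≤ T + 2 * dist q.ofLp p.ofLp) :
    ∫ x in (cube p S \ cube p (l + 2 * dist q.ofLp p.ofLp)) \ (cube q T \ cube q l),
      dist x p ^ (-n) ∂μ ≤ C₀ * (√d * 3) ^ n := by
  set a := dist q.ofLp p.ofLp
  set r := max ((l + 2 * a) / 2) (T / 2 - a)
  have hr := le_max_left ((l + 2 * a) / 2) (T / 2 - a)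
  have hr' := le_max_right ((l + 2 * a) / 2) (T / 2 - a)
  have ha : 0 ≤ a := dist_nonneg
  refine setIntegral_le_of_setLIntegral_ofReal_le (fun x => by positivity)
    (measurable_dist_rpow p _).aestronglyMeasurable (by positivity)
    (setLIntegral_rpow_neg_dist_le_of_dist_ofLp hμ hn (r := r) (by positivity) (by norm_num)
      fun x hx => ?_)
  simp only [mem_sdiff, mem_cube_iff, not_le, not_and] at hx
  have := dist_triangle x.ofLp q.ofLp p.ofLp
  have := dist_triangle_right x.ofLp q.ofLp p.ofLp
  have hT : T / 2 < dist x.ofLp q.ofLp := not_le.1 fun h => hx.2 h (by linarith)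
  exact ⟨max_le (by linarith) (by linarith), by linarith⟩

theorem setIntegral_sdiff_rpow_neg_dist_le_right (hμ : HasPolynomialGrowth μ n C₀) (hn : 0 ≤ n)
    (hC₀ : 0 ≤ C₀) (hl : 0 < l) (ha : 2 * dist q.ofLp p.ofLp ≤ l)
    (hTS : T ≤ S + 2 * dist q.ofLp p.ofLp) :
    ∫ x in (cube q T \ cube q l) \ (cube p S \ cube p (l + 2 * dist q.ofLp p.ofLp)),
      dist x q ^ (-n) ∂μ ≤ C₀ * (√d * 3) ^ n + C₀ * (√d * 3) ^ n := by
  set a := dist q.ofLp p.ofLp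
  set r := max (l / 2) (S / 2 - a)
  have hr := le_max_left (l / 2) (S / 2 - a)
  have hr' := le_max_right (l / 2) (S / 2 - a)
  refine setIntegral_le_of_setLIntegral_ofReal_le (fun x => by positivity)
    (measurable_dist_rpow q _).aestronglyMeasurable (by positivity) ?_
  rw [← lintegral_inter_add_sdiff _ _ (measurableSet_cube p (l + 2 * a)),
    ENNReal.ofReal_add (by positivity) (by positivity)]
  gcongr
  · refine setLIntegral_rpow_neg_dist_le_of_dist_ofLp hμ hn (r := l / 2) (by positivity)
      (by norm_num) fun x hx => ?_
    simp only [mem_inter_iff, mem_sdiff, mem_cube_iff, not_le] at hx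
    have := dist_triangle_right x.ofLp q.ofLp p.ofLp
    constructor <;> linarith
  · refine setLIntegral_rpow_neg_dist_le_of_dist_ofLp hμ hn (r := r) (by positivity)
      (by norm_num) fun x hx => ?_
    simp only [mem_sdiff, mem_cube_iff, not_le, not_and] at hx
    have := dist_triangle x.ofLp q.ofLp p.ofLp
    have hS : S / 2 < dist x.ofLp p.ofLp := not_le.1 fun h => hx.1.2 h hx.2
    exact ⟨max_le (by linarith) (by linarith), by linarith⟩

theorem abs_setIntegral_cube_sdiff_sub_le (hμ : HasPolynomialGrowth μ n C₀) (hn : 0 ≤ n)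
    (hC₀ : 0 ≤ C₀) (hl : 0 < l) (ha : 2 * dist q.ofLp p.ofLp ≤ l)
    (hST : S ≤ T + 2 * dist q.ofLp p.ofLp) (hTS : T ≤ S + 2 * dist q.ofLp p.ofLp) :
    |∫ x in cube p S \ cube p (l + 2 * dist q.ofLp p.ofLp), dist x p ^ (-n) ∂μ -
      ∫ x in cube q T \ cube q l, dist x q ^ (-n) ∂μ| ≤ defectBound d n C₀ := by
  have hmeas (z : E) (L L' : ℝ) : MeasurableSet (cube z L \ cube z L') :=
    (measurableSet_cube _ _).diff (measurableSet_cube _ _)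
  calc _ ≤ _ := abs_setIntegral_sub_setIntegral_le (hmeas _ _ _) (hmeas _ _ _)
        (fun x => by positivity) (fun x => by positivity)
        (integrableOn_cube_sdiff_cube hμ hn p (by positivity) S)
        (integrableOn_cube_sdiff_cube hμ hn q hl T)
    _ ≤ defectBound d n C₀ := by
        have := setIntegral_inter_abs_rpow_neg_dist_sub_le (S := S) (T := T) hμ hn hC₀ hl ha
        have := setIntegral_sdiff_rpow_neg_dist_le_left (μ := μ) hμ hn hC₀ hl hST
        have := setIntegral_sdiff_rpow_neg_dist_le_right (μ := μ) hμ hn hC₀ hl ha hTS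
        unfold defectBound
        linarith

end Euclidean

theorem stmt5 {d : ℕ} (n C₀ : ℝ) (hn : 0 < n) (hnd : n ≤ d) (hC₀ : 0 < C₀) :
    ∃ ε₀ : ℝ, 0 < ε₀ ∧
      ∀ (μ : Measure (EuclideanSpace ℝ (Fin d))), Measure.Regular μ →
        (∀ (x : EuclideanSpace ℝ (Fin d)) (r : ℝ), 0 < r →
          μ (Metric.closedBall x r) ≤ ENNReal.ofReal (C₀ * r ^ n)) →
        ∀ (zP zQ zR : EuclideanSpace ℝ (Fin d)) (lP lQ lR : ℝ),
          0 < lP → 0 < lQ → 0 < lR →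
          cube zP lP ⊆ cube zQ lQ → cube zQ lQ ⊆ cube zR lR →
          |cdelta μ n zP lP (cube zR lR) -
            (cdelta μ n zP lP (cube zQ lQ) + cdelta μ n zQ lQ (cube zR lR))| ≤ ε₀ := by
  have hd : 0 < d := by exact_mod_cast hn.trans_le hnd
  have : Nonempty (Fin d) := ⟨⟨0, hd⟩⟩
  refine ⟨defectBound d n C₀, by unfold defectBound; positivity,
    fun μ _ hμ zP zQ zR lP lQ lR hlP hlQ _ hPQ hQR => ?_⟩
  have hPQ' := (cube_subset_cube_iff hlP.le).1 hPQ
  rw [← sub_sub, cdelta_sub_cdelta hμ hn.le hlP hlQ hPQ hQR, cdelta_cube hlQ hQR]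
  refine abs_setIntegral_cube_sdiff_sub_le hμ hn.le hC₀.le hlQ ?_ ?_ ?_
  · linarith [dist_comm zP.ofLp zQ.ofLp]
  · linarith [dist_triangle zR.ofLp zQ.ofLp zP.ofLp]
  · linarith [dist_triangle zR.ofLp zP.ofLp zQ.ofLp, dist_comm zP.ofLp zQ.ofLp]
end
end

section
/- Besicovitch covering with size control: Let A ⊂ ℝ^d be a bounded set and for each x ∈ A let Q_x be a closed axis-parallel cube centered at x. Then there exists a finite or countable subfamily {Q_{x_i}}_i of {Q_x}_{x∈A} covering A with overlap bounded by a dimensional constant C(d) (i.e. χ_A ≤ Σ_i χ_{Q_{x_i}} ≤ C(d)), and with the additional property that whenever z ∈ A ∩ Q_{x_i} for some i, then ℓ(Q_z) ≤ 4 ℓ(Q_{x_i}). -/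
open MeasureTheory Metric Set ENNReal

noncomputable section

/-
Every `x ∈ A` has a companion `y`, with `x ∈ cube y (l y / 3)`, whose cube contains no point of `A`
carrying a cube more than four times larger: jump to such points as long as possible, which stops
since `l` is bounded, and the jumps `l x / 2` add up to at most a sixth of the final side.

Only cubes centred at companions are selected, which gives the size control. They are selected
stage by stage, from the side lengths in `(M / 2 ^ (n + 1), M / 2 ^ n]` downwards: at stage `n` one
takes a maximal net of mesh `M / 2 ^ n / 6` among the companions of the points not yet covered, and
it covers those points. A net is separated, hence countable, and a point `p` lies in at most
`13 ^ d` cubes of one stage. Two cubes through `p` from stages at least two apart cannot have `p` in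
the same one of their `4 ^ d` quarter subcubes: otherwise the small one, together with the point it
was selected for, would lie inside the large one, selected earlier. So at most `4 ^ d * 2 * 13 ^ d`
selected cubes contain `p`.
-/

namespace Besicovitch

open SetRel

variable {d : ℕ}

section Cube

variable {c x y z : EuclideanSpace ℝ (Fin d)} {r r' : ℝ}

lemma center_mem_cube (hr : 0 ≤ r) : c ∈ cube c r := fun _ => by
  simpa using div_nonneg hr two_pos.le

lemma mem_cube_comm : x ∈ cube y r ↔ y ∈ cube x r := by
  simp only [cube, mem_ofPred_eq, abs_sub_comm (x _)]

lemma cube_mono (h : r ≤ r') : cube c r ⊆ cube c r' := fun _ hx i => (hx i).trans (by linarith)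

lemma mem_cube_add (hx : x ∈ cube y r) (hy : y ∈ cube z r') : x ∈ cube z (r + r') := fun i =>
  calc |x i - z i| ≤ |x i - y i| + |y i - z i| := abs_sub_le _ _ _
    _ ≤ (r + r') / 2 := by linarith [hx i, hy i]

end Cube

section Quarter

/-- Which of the four quarters of `[-r/2, r/2]` contains `t`. -/
def intervalQuarter (t r : ℝ) : Bool × Bool := (decide (0 ≤ t), decide (r / 4 < |t|))

lemma abs_sub_le_of_intervalQuarter_eq {p c c' z r r' : ℝ} (hp : |p - c| ≤ r / 2)
    (hp' : |p - c'| ≤ r' / 2) (hr : 2 * r' < r)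
    (hq : intervalQuarter (p - c) r = intervalQuarter (p - c') r') (hz : |z - c'| ≤ r' / 6) :
    |z - c| ≤ r / 2 := by
  simp only [intervalQuarter, Prod.mk.injEq, decide_eq_decide] at hq
  obtain ⟨hsign, hfar⟩ := hq
  rw [abs_le] at hp hp' hz ⊢
  rcases le_or_gt 0 (p - c) with ht | ht
  · have ht' := hsign.mp ht
    rw [abs_of_nonneg ht, abs_of_nonneg ht'] at hfar
    by_cases hc : r / 4 < p - c
    · have := hfar.mp hc
      constructor <;> linarith
    · constructor <;> linarith
  · have ht' : p - c' < 0 := lt_of_not_ge (mt hsign.mpr ht.not_ge)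
    rw [abs_of_neg ht, abs_of_neg ht'] at hfar
    by_cases hc : r / 4 < -(p - c)
    · have := hfar.mp hc
      constructor <;> linarith
    · constructor <;> linarith

def cubeQuarter (p c : EuclideanSpace ℝ (Fin d)) (r : ℝ) : Fin d → Bool × Bool :=
  fun i => intervalQuarter (p i - c i) r

lemma cube_subset_of_cubeQuarter_eq {p c c' : EuclideanSpace ℝ (Fin d)} {r r' : ℝ}
    (hp : p ∈ cube c r) (hp' : p ∈ cube c' r') (hr : 2 * r' < r)
    (hq : cubeQuarter p c r = cubeQuarter p c' r') : cube c' (r' / 3) ⊆ cube c r :=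
  fun _ hz i => abs_sub_le_of_intervalQuarter_eq (hp i) (hp' i) hr (congrFun hq i)
    ((hz i).trans_eq (by ring))

end Quarter

section Net

def cubeRel (r : ℝ) : SetRel (EuclideanSpace ℝ (Fin d)) (EuclideanSpace ℝ (Fin d)) :=
  {q | q.1 ∈ cube q.2 r}

lemma _root_.SetRel.exists_maximal_isSeparated {X : Type*} (R : SetRel X X) (s : Set X) :
    ∃ N, Maximal (fun N ↦ N ⊆ s ∧ IsSeparated R N) N :=
  zorn_subset _ fun c hcs hc => ⟨⋃₀ c,
    ⟨sUnion_subset fun _ ht => (hcs ht).1, hc.pairwise_sUnion.2 fun _ ht => (hcs ht).2⟩,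
    fun _ => subset_sUnion_of_mem⟩

def cubeNet (r : ℝ) (W : Set (EuclideanSpace ℝ (Fin d))) : Set (EuclideanSpace ℝ (Fin d)) :=
  (SetRel.exists_maximal_isSeparated (cubeRel r) W).choose

variable {r : ℝ} {W : Set (EuclideanSpace ℝ (Fin d))}

lemma cubeNet_subset : cubeNet r W ⊆ W :=
  (SetRel.exists_maximal_isSeparated (cubeRel r) W).choose_spec.1.1

lemma isSeparated_cubeNet : IsSeparated (cubeRel r) (cubeNet r W) :=
  (SetRel.exists_maximal_isSeparated (cubeRel r) W).choose_spec.1.2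

lemma exists_mem_cubeNet (hr : 0 ≤ r) {w : EuclideanSpace ℝ (Fin d)} (hw : w ∈ W) :
    ∃ y ∈ cubeNet r W, w ∈ cube y r :=
  haveI : (cubeRel (d := d) r).IsRefl := ⟨fun _ => center_mem_cube hr⟩
  haveI : (cubeRel (d := d) r).IsSymm := ⟨fun _ _ => mem_cube_comm.mp⟩
  IsCover.of_maximal_isSeparated (SetRel.exists_maximal_isSeparated (cubeRel r) W).choose_spec hw

def gridCell (r : ℝ) (p x : EuclideanSpace ℝ (Fin d)) : Fin d → ℤ :=
  fun i => ⌊(x i - p i) / (r / 2)⌋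

lemma injOn_gridCell (hr : 0 < r) {T : Set (EuclideanSpace ℝ (Fin d))}
    (hT : IsSeparated (cubeRel r) T) (p : EuclideanSpace ℝ (Fin d)) : InjOn (gridCell r p) T := by
  intro x hx y hy hxy
  by_contra hne
  refine hT hx hy hne fun i => ?_
  have h := Int.abs_sub_lt_one_of_floor_eq_floor (congrFun hxy i)
  rw [← sub_div, abs_div, abs_of_pos (half_pos hr), div_lt_one (half_pos hr)] at h
  exact le_of_lt (by simpa using h)

lemma countable_of_isSeparated_cubeRel (hr : 0 < r) {T : Set (EuclideanSpace ℝ (Fin d))}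
    (hT : IsSeparated (cubeRel r) T) : T.Countable :=
  (mapsTo_univ _ _).countable_of_injOn (injOn_gridCell hr hT 0) countable_univ

lemma gridCell_mem_piFinset {p x : EuclideanSpace ℝ (Fin d)} (hr : 0 < r)
    (hx : x ∈ cube p (6 * r)) :
    gridCell r p x ∈ Fintype.piFinset fun _ => Finset.Icc (-6 : ℤ) 6 := by
  simp only [Fintype.mem_piFinset, Finset.mem_Icc]
  intro i
  have h := abs_le.mp ((hx i).trans_eq (show 6 * r / 2 = 6 * (r / 2) by ring))
  constructor
  · exact Int.le_floor.mpr (by rw [le_div_iff₀ (half_pos hr)]; push_cast; linarith)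
  · exact Int.floor_le_iff.mpr (by rw [div_lt_iff₀ (half_pos hr)]; push_cast; linarith)

end Net

section Construction

variable (A : Set (EuclideanSpace ℝ (Fin d))) (l : EuclideanSpace ℝ (Fin d) → ℝ)

def IsSizeControlled (y : EuclideanSpace ℝ (Fin d)) : Prop :=
  y ∈ A ∧ ∀ z ∈ A, z ∈ cube y (l y) → l z ≤ 4 * l y

variable {A l} {M : ℝ}

lemma exists_isSizeControlled_mem_cube (hl : ∀ x ∈ A, 0 < l x) (hM : ∀ x ∈ A, l x ≤ M)
    {x : EuclideanSpace ℝ (Fin d)} (hx : x ∈ A) :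
    ∃ y, IsSizeControlled A l y ∧ x ∈ cube y (l y / 3) := by
  have key : ∀ n : ℕ, ∀ x ∈ A, M ≤ 4 ^ n * l x →
      ∃ y, IsSizeControlled A l y ∧ x ∈ cube y ((l y - l x) / 3) := by
    intro n
    induction n with
    | zero =>
      intro x hx hxM
      rw [pow_zero, one_mul] at hxM
      refine ⟨x, ⟨hx, fun z hz _ => ?_⟩, by simpa using center_mem_cube le_rfl⟩
      linarith [hM z hz, hl x hx]
    | succ n ih =>
      intro x hx hxM
      by_cases hgood : IsSizeControlled A l x
      · exact ⟨x, hgood, by simpa using center_mem_cube le_rfl⟩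
      obtain ⟨z, hz, hzx, hlz⟩ : ∃ z ∈ A, z ∈ cube x (l x) ∧ 4 * l x < l z := by
        simpa [IsSizeControlled, hx] using hgood
      have hzM : M ≤ 4 ^ n * l z := by
        rw [pow_succ] at hxM
        nlinarith [pow_pos (four_pos (α := ℝ)) n]
      obtain ⟨y, hy, hzy⟩ := ih z hz hzM
      exact ⟨y, hy, cube_mono (by linarith) (mem_cube_add (mem_cube_comm.mp hzx) hzy)⟩
  obtain ⟨n, hn⟩ := pow_unbounded_of_one_lt (M / l x) (by norm_num : (1 : ℝ) < 4)
  obtain ⟨y, hy, hxy⟩ := key n x hx ((div_lt_iff₀ (hl x hx)).mp hn).le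
  exact ⟨y, hy, cube_mono (by linarith [hl x hx]) hxy⟩

lemma exists_div_two_pow_lt_le {r : ℝ} (hr₀ : 0 < r) (hr : r ≤ M) :
    ∃ n : ℕ, M / 2 ^ (n + 1) < r ∧ r ≤ M / 2 ^ n := by
  obtain ⟨n, hn, hn'⟩ := exists_nat_pow_near ((one_le_div hr₀).mpr hr) one_lt_two
  exact ⟨n, (div_lt_iff₀ (by positivity)).mpr (by rwa [div_lt_iff₀ hr₀, mul_comm] at hn'),
    (le_div_iff₀ (by positivity)).mpr (by rwa [le_div_iff₀ hr₀, mul_comm] at hn)⟩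

variable (A l M) (g : EuclideanSpace ℝ (Fin d) → EuclideanSpace ℝ (Fin d))

def stageCandidates (n : ℕ) (U : Set (EuclideanSpace ℝ (Fin d))) : Set (EuclideanSpace ℝ (Fin d)) :=
  {y ∈ g '' (A \ U) | M / 2 ^ (n + 1) < l y ∧ l y ≤ M / 2 ^ n}

def coveredBefore : ℕ → Set (EuclideanSpace ℝ (Fin d))
  | 0 => ∅
  | n + 1 => coveredBefore n ∪
      ⋃ y ∈ cubeNet (M / 2 ^ n / 6) (stageCandidates A l M g n (coveredBefore n)), cube y (l y)

def selected (n : ℕ) : Set (EuclideanSpace ℝ (Fin d)) :=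
  cubeNet (M / 2 ^ n / 6) (stageCandidates A l M g n (coveredBefore A l M g n))

variable {A l M g} {m n : ℕ}

lemma selected_subset_stageCandidates :
    selected A l M g n ⊆ stageCandidates A l M g n (coveredBefore A l M g n) :=
  cubeNet_subset

lemma selected_subset_image : selected A l M g n ⊆ g '' A :=
  fun _ hy => image_mono sdiff_subset (selected_subset_stageCandidates hy).1

lemma countable_selected (hM : 0 < M) : (selected A l M g n).Countable :=
  countable_of_isSeparated_cubeRel (by positivity) isSeparated_cubeNet

lemma cube_subset_coveredBefore {y : EuclideanSpace ℝ (Fin d)} (hmn : m < n)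
    (hy : y ∈ selected A l M g m) : cube y (l y) ⊆ coveredBefore A l M g n := by
  induction n, hmn using Nat.le_induction with
  | base =>
    exact subset_union_of_subset_right (subset_biUnion_of_mem (u := fun y => cube y (l y)) hy) _
  | succ n _ ih => exact ih.trans subset_union_left

lemma coveredBefore_subset_iUnion (n : ℕ) :
    coveredBefore A l M g n ⊆ ⋃ y ∈ ⋃ k, selected A l M g k, cube y (l y) := by
  induction n with
  | zero => exact empty_subset _
  | succ n ih =>
    exact union_subset ih (biUnion_mono (fun y hy => mem_iUnion.mpr ⟨n, hy⟩) fun _ _ => le_rfl)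

lemma subset_iUnion_cube_selected (hl : ∀ x ∈ A, 0 < l x) (hM : ∀ x ∈ A, l x ≤ M)
    (hgA : ∀ x ∈ A, g x ∈ A) (hnear : ∀ x ∈ A, x ∈ cube (g x) (l (g x) / 3)) :
    A ⊆ ⋃ y ∈ ⋃ n, selected A l M g n, cube y (l y) := by
  intro x hx
  have hgx := hl _ (hgA x hx)
  obtain ⟨n, hn₁, hn₂⟩ := exists_div_two_pow_lt_le hgx (hM _ (hgA x hx))
  by_cases hxU : x ∈ coveredBefore A l M g n
  · exact coveredBefore_subset_iUnion n hxU
  obtain ⟨y, hy, hgy⟩ := exists_mem_cubeNet (r := M / 2 ^ n / 6)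
    (W := stageCandidates A l M g n (coveredBefore A l M g n))
    (div_nonneg (hgx.le.trans hn₂) (by norm_num)) ⟨⟨x, ⟨hx, hxU⟩, rfl⟩, hn₁, hn₂⟩
  have hly : M / 2 ^ n / 2 < l y := by
    simpa [pow_succ, div_div] using (selected_subset_stageCandidates hy).2.1
  exact mem_biUnion (mem_iUnion.mpr ⟨n, hy⟩)
    (cube_mono (by linarith) (mem_cube_add (hnear x hx) hgy))

lemma cubeQuarter_ne_of_add_two_le (hM : 0 ≤ M) (hnear : ∀ x ∈ A, x ∈ cube (g x) (l (g x) / 3))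
    (hmn : m + 2 ≤ n) {x x' p : EuclideanSpace ℝ (Fin d)} (hx : x ∈ selected A l M g m)
    (hx' : x' ∈ selected A l M g n) (hp : p ∈ cube x (l x)) (hp' : p ∈ cube x' (l x')) :
    cubeQuarter p x (l x) ≠ cubeQuarter p x' (l x') := by
  obtain ⟨⟨z, ⟨hz, hzU⟩, rfl⟩, -, hlz⟩ := selected_subset_stageCandidates hx'
  have hlx := (selected_subset_stageCandidates hx).2.1
  have hscale : 2 * l (g z) < l x := by
    have : M / 2 ^ n ≤ M / 2 ^ (m + 2) :=
      div_le_div_of_nonneg_left hM (by positivity) (pow_le_pow_right₀ one_le_two hmn)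
    have : M / 2 ^ (m + 2) = M / 2 ^ (m + 1) / 2 := by ring
    linarith
  exact fun hq => hzU (cube_subset_coveredBefore (by omega) hx
    (cube_subset_of_cubeQuarter_eq hp hp' hscale hq (hnear z hz)))

lemma encard_setOf_mem_cube_le (hM : 0 < M) (hnear : ∀ x ∈ A, x ∈ cube (g x) (l (g x) / 3))
    (p : EuclideanSpace ℝ (Fin d)) :
    {x ∈ ⋃ n, selected A l M g n | p ∈ cube x (l x)}.encard ≤ (4 ^ d * (2 * 13 ^ d) : ℕ) := by
  set N := {x ∈ ⋃ n, selected A l M g n | p ∈ cube x (l x)}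
  choose! stage hstage using fun x (hx : x ∈ N) => mem_iUnion.mp hx.1
  let code x := (cubeQuarter p x (l x), stage x % 2, gridCell (M / 2 ^ stage x / 6) p x)
  let codes : Finset ((Fin d → Bool × Bool) × ℕ × (Fin d → ℤ)) :=
    Finset.univ ×ˢ Finset.range 2 ×ˢ Fintype.piFinset fun _ => Finset.Icc (-6) 6
  have hmaps : MapsTo code N codes := by
    intro x hx
    have hlx := (selected_subset_stageCandidates (hstage x hx)).2.2
    simp only [codes, Finset.mem_coe, Finset.mem_product, Finset.mem_univ, Finset.mem_range,
      true_and]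
    refine ⟨Nat.mod_lt _ two_pos, gridCell_mem_piFinset (by positivity) ?_⟩
    exact cube_mono (by linarith) (mem_cube_comm.mp hx.2)
  have hinj : InjOn code N := by
    intro x hx x' hx' h
    wlog hle : stage x ≤ stage x' generalizing x x'
    · exact (this hx' hx h.symm (le_of_not_ge hle)).symm
    simp only [code, Prod.mk.injEq] at h
    obtain ⟨hquarter, hparity, hcell⟩ := h
    rcases (by omega : stage x = stage x' ∨ stage x + 2 ≤ stage x') with heq | hlt
    · have hx₁ := hstage x hx
      rw [heq] at hcell hx₁
      exact injOn_gridCell (by positivity) isSeparated_cubeNet p hx₁ (hstage x' hx') hcell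
    · exact absurd hquarter
        (cubeQuarter_ne_of_add_two_le hM.le hnear hlt (hstage x hx) (hstage x' hx') hx.2 hx'.2)
  calc N.encard ≤ _ := encard_le_encard_of_injOn hmaps hinj
    _ = (4 ^ d * (2 * 13 ^ d) : ℕ) := by
      rw [encard_coe_eq_coe_finsetCard]
      simp [codes, Finset.card_product]

end Construction

end Besicovitch

open Besicovitch in
theorem stmt7 {d : ℕ} :
    ∃ C : ℕ, ∀ (A : Set (EuclideanSpace ℝ (Fin d))), Bornology.IsBounded A →
      ∀ l : EuclideanSpace ℝ (Fin d) → ℝ, (∀ x ∈ A, 0 < l x) → BddAbove (l '' A) →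
        ∃ s : Set (EuclideanSpace ℝ (Fin d)), s ⊆ A ∧ s.Countable ∧
          A ⊆ ⋃ x ∈ s, cube x (l x) ∧
          (∀ y : EuclideanSpace ℝ (Fin d),
            {x ∈ s | y ∈ cube x (l x)}.encard ≤ (C : ℕ∞)) ∧
          (∀ z ∈ A, ∀ x ∈ s, z ∈ cube x (l x) → l z ≤ 4 * l x) := by
  refine ⟨4 ^ d * (2 * 13 ^ d), fun A _ l hl hbdd => ?_⟩
  obtain ⟨M, hM₁, hM⟩ := hbdd.exists_ge 1
  replace hM : ∀ x ∈ A, l x ≤ M := fun x hx => hM _ (mem_image_of_mem l hx)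
  choose! g hgood hnear using fun x (hx : x ∈ A) => exists_isSizeControlled_mem_cube hl hM hx
  have himage : ⋃ n, selected A l M g n ⊆ g '' A := iUnion_subset fun _ => selected_subset_image
  refine ⟨⋃ n, selected A l M g n, ?_, countable_iUnion fun _ => countable_selected (by linarith),
    subset_iUnion_cube_selected hl hM (fun x hx => (hgood x hx).1) hnear,
    encard_setOf_mem_cube_le (by linarith) hnear, ?_⟩
  · intro y hy
    obtain ⟨x, hx, rfl⟩ := himage hy
    exact (hgood x hx).1
  · intro z hz y hy hzy
    obtain ⟨x, hx, rfl⟩ := himage hy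
    exact (hgood x hx).2 z hz hzy
end
end

section
/- Let μ be a Radon measure on ℝ^d with μ(B(x,r)) ≤ C₀ r^n, and let N be the maximal operator Nf(x) = sup_{0<r<R} (1 + ‖φ_{x,r,R}‖_{L¹(μ)})^{−1} ∫ φ_{x,r,R} |f| dμ, where φ_{x,r,R}(y) equals r^{−n} for |x−y| ≤ r, |x−y|^{−n} for r ≤ |x−y| ≤ R, and 0 for |x−y| > R. Then for every λ ≥ 1 there is a constant C(λ) such that Nf(x) ≤ C(λ) M_λ f(x) for all f ∈ L¹_loc(μ) and x ∈ supp(μ), where M_λ f(x) = sup_{r>0} μ(B(x,λr))^{−1} ∫_{B(x,r)} |f| dμ. -/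
/-!
Compare `φ_{x,r,R}` with the dyadic kernel `D_K = ∑_{j<K} (2ʲr)⁻ⁿ 𝟙_{B(x, 2ʲr)}`. If
`2ᴶ r ≤ R < 2ᴶ⁺¹ r`, then `D_{J+1} ≤ (1 - 2⁻ⁿ)⁻¹ φ` and `φ ≤ 2ⁿ D_{J+2}` pointwise, since both
kernels behave like `max(r, |y - x|)⁻ⁿ` up to a factor two in the radius. Integrating `|f|`
against `D_{J+2}` and choosing `λ ≤ 2ᴸ`, each average over `B(x, 2ʲr)` is bounded by
`M_λ f(x) μ(B(x, 2ʲ⁺ᴸr))`. The resulting sum `∑_{j ≤ J+L+1} (2ʲr)⁻ⁿ μ(B(x, 2ʲr))` splits into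
the terms `j ≤ J`, whose sum is `∫ D_{J+1} dμ ≲ ‖φ‖₁`, and `L + 1` further terms, each at most
`C₀` by the growth condition; this is where the `1 +` in the normalisation of `N` is needed.
-/

open MeasureTheory Metric Set ENNReal

noncomputable section

/-- The support of a measure on a metric space. -/
def msupport {X : Type*} [MeasurableSpace X] [PseudoMetricSpace X]
    (μ : Measure X) : Set X := {x | ∀ r : ℝ, 0 < r → 0 < μ (Metric.ball x r)}

/-- The truncated kernel φ_{x,r,R}. -/
def phi {d : ℕ} (n : ℝ) (x : EuclideanSpace ℝ (Fin d)) (r R : ℝ)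
    (y : EuclideanSpace ℝ (Fin d)) : ℝ :=
  if dist y x ≤ r then r ^ (-n)
  else if dist y x ≤ R then dist y x ^ (-n)
  else 0

/-- The maximal operator N. -/
def Nmax {d : ℕ} (n : ℝ) (μ : Measure (EuclideanSpace ℝ (Fin d)))
    (f : EuclideanSpace ℝ (Fin d) → ℝ) (x : EuclideanSpace ℝ (Fin d)) : ℝ≥0∞ :=
  ⨆ (r : ℝ) (R : ℝ) (_ : 0 < r) (_ : r < R),
    (∫⁻ y, ENNReal.ofReal (phi n x r R y * |f y|) ∂μ) /
      (1 + ∫⁻ y, ENNReal.ofReal (phi n x r R y) ∂μ)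

/-- The λ-dilated centered Hardy–Littlewood maximal operator M_λ. -/
def Mlam {d : ℕ} (μ : Measure (EuclideanSpace ℝ (Fin d))) (lam : ℝ)
    (f : EuclideanSpace ℝ (Fin d) → ℝ) (x : EuclideanSpace ℝ (Fin d)) : ℝ≥0∞ :=
  ⨆ (r : ℝ) (_ : 0 < r),
    (∫⁻ y in Metric.closedBall x r, ENNReal.ofReal |f y| ∂μ) /
      μ (Metric.closedBall x (lam * r))

theorem sum_range_shift_le {a : ℕ → ℝ≥0∞} {c : ℝ≥0∞} (ha : ∀ i, a i ≤ c) (K L : ℕ) :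
    ∑ j ∈ Finset.range (K + 1), a (j + L) ≤ ∑ i ∈ Finset.range K, a i + (L + 1) * c := by
  calc ∑ j ∈ Finset.range (K + 1), a (j + L)
      ≤ ∑ i ∈ Finset.range L, a i + ∑ j ∈ Finset.range (K + 1), a (L + j) := by
        simp only [add_comm _ L]; exact le_add_self
    _ = ∑ i ∈ Finset.range K, a i + ∑ j ∈ Finset.range (L + 1), a (K + j) := by
        rw [← Finset.sum_range_add, ← Finset.sum_range_add, add_left_comm, add_comm K]
    _ ≤ ∑ i ∈ Finset.range K, a i + (L + 1) * c := by
        gcongr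
        refine (Finset.sum_le_sum fun j _ => ha (K + j)).trans_eq ?_
        simp

theorem ofReal_rpow_neg_mul_measure_closedBall_le {X : Type*} [PseudoMetricSpace X]
    [MeasurableSpace X] {μ : Measure X} {x : X} {n ρ C₀ : ℝ} (hρ : 0 < ρ)
    (h : μ (closedBall x ρ) ≤ ENNReal.ofReal (C₀ * ρ ^ n)) :
    ENNReal.ofReal (ρ ^ (-n)) * μ (closedBall x ρ) ≤ ENNReal.ofReal C₀ := by
  calc ENNReal.ofReal (ρ ^ (-n)) * μ (closedBall x ρ)
      ≤ ENNReal.ofReal (ρ ^ (-n)) * ENNReal.ofReal (C₀ * ρ ^ n) := by gcongr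
    _ = ENNReal.ofReal C₀ := by
      rw [← ENNReal.ofReal_mul (by positivity), Real.rpow_neg hρ.le, mul_comm C₀,
        inv_mul_cancel_left₀ (Real.rpow_pos_of_pos hρ n).ne']

/-- At `s = dist y x` this is the dyadic kernel `D_K(y) = ∑_{j<K} (2ʲr)⁻ⁿ 𝟙_{B(x, 2ʲr)}(y)`. -/
def dyadicSum (n r s : ℝ) (K : ℕ) : ℝ :=
  ∑ j ∈ Finset.range K, if s ≤ 2 ^ j * r then (2 ^ j * r) ^ (-n) else 0

section Dyadic

variable {n r s : ℝ}

theorem dyadicSum_nonneg (hr : 0 ≤ r) (K : ℕ) : 0 ≤ dyadicSum n r s K :=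
  Finset.sum_nonneg fun j _ => by split_ifs <;> positivity

theorem dyadicSum_succ (n r s : ℝ) (K : ℕ) :
    dyadicSum n r s (K + 1) = (if s ≤ r then r ^ (-n) else 0) + dyadicSum n (2 * r) s K := by
  simp only [dyadicSum, Finset.sum_range_succ', pow_succ, mul_assoc, pow_zero, one_mul]
  rw [add_comm]

theorem dyadicSum_le (hn : 0 < n) (hr : 0 < r) (K : ℕ) :
    dyadicSum n r s K ≤ (1 - 2 ^ (-n))⁻¹ * max r s ^ (-n) := by
  have hq : (2 : ℝ) ^ (-n) < 1 := Real.rpow_lt_one_of_one_lt_of_neg one_lt_two (neg_neg_of_pos hn)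
  induction K generalizing r with
  | zero =>
    simp only [dyadicSum, Finset.range_zero, Finset.sum_empty]
    exact mul_nonneg (inv_nonneg.2 (by linarith))
      (Real.rpow_nonneg (hr.le.trans (le_max_left _ _)) _)
  | succ K ih =>
    rw [dyadicSum_succ]
    refine (add_le_add le_rfl (ih (r := 2 * r) (by positivity))).trans ?_
    split_ifs with hs
    · rw [max_eq_left hs, max_eq_left (hs.trans (by linarith)), Real.mul_rpow zero_le_two hr.le]
      field_simp
      rw [one_add_div (by linarith), sub_add_cancel]
    · rw [zero_add, max_eq_right (le_of_not_ge hs)]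
      refine mul_le_mul_of_nonneg_left ?_ (inv_nonneg.2 (by linarith))
      exact Real.rpow_le_rpow_of_nonpos (hr.trans (lt_of_not_ge hs)) (le_max_right _ _)
        (neg_nonpos.2 hn.le)

theorem exists_le_two_pow_mul_le_two_mul_max (hr : 0 ≤ r) {K : ℕ} (hs : s ≤ 2 ^ K * r) :
    ∃ j ≤ K, s ≤ 2 ^ j * r ∧ 2 ^ j * r ≤ 2 * max r s := by
  induction K with
  | zero => exact ⟨0, le_rfl, by simpa using hs, by simp; linarith [le_max_left r s]⟩
  | succ K ih =>
    by_cases hK : s ≤ 2 ^ K * r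
    · obtain ⟨j, hjK, hj⟩ := ih hK
      exact ⟨j, hjK.trans K.le_succ, hj⟩
    · refine ⟨K + 1, le_rfl, hs, ?_⟩
      rw [pow_succ]
      linarith [le_max_right r s]

theorem rpow_neg_max_le_two_rpow_mul_dyadicSum (hn : 0 < n) (hr : 0 < r) {K : ℕ}
    (hs : s ≤ 2 ^ K * r) : max r s ^ (-n) ≤ 2 ^ n * dyadicSum n r s (K + 1) := by
  obtain ⟨j, hjK, hsj, hj⟩ := exists_le_two_pow_mul_le_two_mul_max hr.le hs
  have hterm : (2 ^ j * r) ^ (-n) ≤ dyadicSum n r s (K + 1) :=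
    le_of_eq_of_le (if_pos hsj).symm <|
      Finset.single_le_sum (f := fun j => if s ≤ 2 ^ j * r then (2 ^ j * r) ^ (-n) else 0)
        (fun i _ => by split_ifs <;> positivity) (Finset.mem_range.2 (Nat.lt_succ_of_le hjK))
  calc max r s ^ (-n) ≤ (2 ^ j * r / 2) ^ (-n) :=
        Real.rpow_le_rpow_of_nonpos (by positivity) (by linarith) (neg_nonpos.2 hn.le)
    _ = 2 ^ n * (2 ^ j * r) ^ (-n) := by
        rw [Real.div_rpow (by positivity) zero_le_two, Real.rpow_neg zero_le_two, div_inv_eq_mul,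
          mul_comm]
    _ ≤ 2 ^ n * dyadicSum n r s (K + 1) := by gcongr

theorem two_pow_mul_rpow_neg (n : ℝ) {ρ : ℝ} (hρ : 0 ≤ ρ) (L : ℕ) :
    ρ ^ (-n) = (2 ^ n) ^ L * (2 ^ L * ρ) ^ (-n) := by
  rw [Real.mul_rpow (by positivity) hρ, ← Real.rpow_pow_comm zero_le_two, Real.rpow_neg zero_le_two,
    inv_pow, mul_inv_cancel_left₀ (by positivity)]

end Dyadic

theorem lintegral_ofReal_dyadicSum_mul {X : Type*} [PseudoMetricSpace X] [MeasurableSpace X]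
    [OpensMeasurableSpace X] {μ : Measure X} {g : X → ℝ≥0∞} (hg : AEMeasurable g μ)
    (n : ℝ) {r : ℝ} (hr : 0 ≤ r) (x : X) (K : ℕ) :
    ∫⁻ y, ENNReal.ofReal (dyadicSum n r (dist y x) K) * g y ∂μ =
      ∑ j ∈ Finset.range K,
        ENNReal.ofReal ((2 ^ j * r) ^ (-n)) * ∫⁻ y in closedBall x (2 ^ j * r), g y ∂μ := by
  have hsum : ∀ y, ENNReal.ofReal (dyadicSum n r (dist y x) K) * g y =
      ∑ j ∈ Finset.range K,
        (closedBall x (2 ^ j * r)).indicator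
          (fun y => ENNReal.ofReal ((2 ^ j * r) ^ (-n)) * g y) y := by
    intro y
    rw [dyadicSum, ENNReal.ofReal_sum_of_nonneg fun j _ => by split_ifs <;> positivity,
      Finset.sum_mul]
    refine Finset.sum_congr rfl fun j _ => ?_
    by_cases hy : dist y x ≤ 2 ^ j * r <;> simp [hy, indicator]
  simp_rw [hsum]
  rw [lintegral_finsetSum' _ fun j _ => (hg.const_mul _).indicator measurableSet_closedBall]
  refine Finset.sum_congr rfl fun j _ => ?_
  rw [lintegral_indicator measurableSet_closedBall, lintegral_const_mul' _ _ ofReal_ne_top]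

section Kernel

variable {d : ℕ} {n r R : ℝ} {x y : EuclideanSpace ℝ (Fin d)}

theorem phi_of_dist_le (h : dist y x ≤ R) : phi n x r R y = max r (dist y x) ^ (-n) := by
  unfold phi
  split_ifs with hr
  · rw [max_eq_left hr]
  · rw [max_eq_right (le_of_not_ge hr)]

theorem phi_of_lt_dist (hrR : r ≤ R) (h : R < dist y x) : phi n x r R y = 0 := by
  unfold phi
  rw [if_neg (by linarith), if_neg h.not_ge]

theorem phi_le_two_rpow_mul_dyadicSum (hn : 0 < n) (hr : 0 < r) (hrR : r ≤ R) {K : ℕ}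
    (hR : R ≤ 2 ^ K * r) : phi n x r R y ≤ 2 ^ n * dyadicSum n r (dist y x) (K + 1) := by
  by_cases h : dist y x ≤ R
  · rw [phi_of_dist_le h]
    exact rpow_neg_max_le_two_rpow_mul_dyadicSum hn hr (h.trans hR)
  · rw [phi_of_lt_dist hrR (lt_of_not_ge h)]
    exact mul_nonneg (by positivity) (dyadicSum_nonneg hr.le _)

theorem dyadicSum_le_phi (hn : 0 < n) (hr : 0 < r) {K : ℕ} (hR : 2 ^ K * r ≤ R) :
    dyadicSum n r (dist y x) (K + 1) ≤ (1 - 2 ^ (-n))⁻¹ * phi n x r R y := by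
  by_cases h : dist y x ≤ R
  · rw [phi_of_dist_le h]
    exact dyadicSum_le hn hr _
  · have hrR : r ≤ R := (le_mul_of_one_le_left hr.le (one_le_pow₀ one_le_two)).trans hR
    rw [phi_of_lt_dist hrR (lt_of_not_ge h), mul_zero]
    refine (Finset.sum_eq_zero fun j hj => if_neg fun hj' => h ?_).le
    have hjK : (2 : ℝ) ^ j ≤ 2 ^ K :=
      pow_le_pow_right₀ one_le_two (Nat.lt_succ_iff.1 (Finset.mem_range.1 hj))
    exact hj'.trans ((mul_le_mul_of_nonneg_right hjK hr.le).trans hR)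

end Kernel

theorem setLIntegral_closedBall_le_Mlam_mul {d : ℕ} {μ : Measure (EuclideanSpace ℝ (Fin d))}
    {lam s : ℝ} {f : EuclideanSpace ℝ (Fin d) → ℝ} {x : EuclideanSpace ℝ (Fin d)} (hs : 0 < s)
    (hM : Mlam μ lam f x ≠ ⊤) (hμ : μ (closedBall x (lam * s)) ≠ ⊤) :
    ∫⁻ y in closedBall x s, ENNReal.ofReal |f y| ∂μ ≤
      Mlam μ lam f x * μ (closedBall x (lam * s)) :=
  (ENNReal.div_le_iff_le_mul (Or.inr hM) (Or.inl hμ)).1 <|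
    le_iSup₂ (f := fun s (_ : 0 < s) => (∫⁻ y in closedBall x s, ENNReal.ofReal |f y| ∂μ) /
      μ (closedBall x (lam * s))) s hs

theorem ofReal_rpow_neg_mul_setLIntegral_le_Mlam {d : ℕ}
    {μ : Measure (EuclideanSpace ℝ (Fin d))} {n lam ρ : ℝ} {L : ℕ}
    {f : EuclideanSpace ℝ (Fin d) → ℝ} {x : EuclideanSpace ℝ (Fin d)} (hρ : 0 < ρ)
    (hL : lam ≤ 2 ^ L) (hM : Mlam μ lam f x ≠ ⊤) (hμ : μ (closedBall x (2 ^ L * ρ)) ≠ ⊤) :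
    ENNReal.ofReal (ρ ^ (-n)) * ∫⁻ y in closedBall x ρ, ENNReal.ofReal |f y| ∂μ ≤
      ENNReal.ofReal (2 ^ n) ^ L *
        (ENNReal.ofReal ((2 ^ L * ρ) ^ (-n)) * μ (closedBall x (2 ^ L * ρ))) * Mlam μ lam f x := by
  have hsub : μ (closedBall x (lam * ρ)) ≤ μ (closedBall x (2 ^ L * ρ)) :=
    measure_mono (closedBall_subset_closedBall (by gcongr))
  calc ENNReal.ofReal (ρ ^ (-n)) * ∫⁻ y in closedBall x ρ, ENNReal.ofReal |f y| ∂μ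
      ≤ ENNReal.ofReal (ρ ^ (-n)) * (Mlam μ lam f x * μ (closedBall x (2 ^ L * ρ))) := by
        gcongr
        exact (setLIntegral_closedBall_le_Mlam_mul hρ hM (ne_top_of_le_ne_top hμ hsub)).trans
          (by gcongr)
    _ = _ := by
        rw [two_pow_mul_rpow_neg n hρ.le L, ENNReal.ofReal_mul (by positivity),
          ENNReal.ofReal_pow (by positivity)]
        ring

section Integrals

variable {d : ℕ} {μ : Measure (EuclideanSpace ℝ (Fin d))} {n r R : ℝ}
  {x : EuclideanSpace ℝ (Fin d)}

theorem lintegral_phi_mul_le {f : EuclideanSpace ℝ (Fin d) → ℝ}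
    (hf : AEMeasurable (fun y => ENNReal.ofReal |f y|) μ) (hn : 0 < n) (hr : 0 < r) (hrR : r ≤ R)
    {K : ℕ} (hR : R ≤ 2 ^ K * r) :
    ∫⁻ y, ENNReal.ofReal (phi n x r R y * |f y|) ∂μ ≤
      ENNReal.ofReal (2 ^ n) * ∑ j ∈ Finset.range (K + 1), ENNReal.ofReal ((2 ^ j * r) ^ (-n)) *
        ∫⁻ y in closedBall x (2 ^ j * r), ENNReal.ofReal |f y| ∂μ := by
  calc ∫⁻ y, ENNReal.ofReal (phi n x r R y * |f y|) ∂μ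
      ≤ ∫⁻ y, ENNReal.ofReal (2 ^ n) *
          (ENNReal.ofReal (dyadicSum n r (dist y x) (K + 1)) * ENNReal.ofReal |f y|) ∂μ := by
        refine lintegral_mono fun y => ?_
        rw [← ENNReal.ofReal_mul (dyadicSum_nonneg hr.le _), ← ENNReal.ofReal_mul (by positivity),
          ← mul_assoc]
        exact ENNReal.ofReal_le_ofReal <| mul_le_mul_of_nonneg_right
          (phi_le_two_rpow_mul_dyadicSum hn hr hrR hR) (abs_nonneg _)
    _ = _ := by
        rw [lintegral_const_mul' _ _ ofReal_ne_top, lintegral_ofReal_dyadicSum_mul hf n hr.le x]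

theorem sum_le_lintegral_phi (hn : 0 < n) (hr : 0 < r) {K : ℕ} (hR : 2 ^ K * r ≤ R) :
    ∑ j ∈ Finset.range (K + 1),
        ENNReal.ofReal ((2 ^ j * r) ^ (-n)) * μ (closedBall x (2 ^ j * r)) ≤
      ENNReal.ofReal (1 - 2 ^ (-n))⁻¹ * ∫⁻ y, ENNReal.ofReal (phi n x r R y) ∂μ := by
  calc _ = ∫⁻ y, ENNReal.ofReal (dyadicSum n r (dist y x) (K + 1)) * 1 ∂μ := by
        simp only [lintegral_ofReal_dyadicSum_mul aemeasurable_const n hr.le x, setLIntegral_one]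
    _ ≤ ∫⁻ y, ENNReal.ofReal (1 - 2 ^ (-n))⁻¹ * ENNReal.ofReal (phi n x r R y) ∂μ := by
        refine lintegral_mono fun y => ?_
        have hq : (2 : ℝ) ^ (-n) < 1 :=
          Real.rpow_lt_one_of_one_lt_of_neg one_lt_two (neg_neg_of_pos hn)
        rw [mul_one, ← ENNReal.ofReal_mul (inv_nonneg.2 (sub_nonneg.2 hq.le))]
        exact ENNReal.ofReal_le_ofReal (dyadicSum_le_phi hn hr hR)
    _ = _ := lintegral_const_mul' _ _ ofReal_ne_top

theorem lintegral_phi_mul_le_Mlam {C₀ lam : ℝ} {L : ℕ} {f : EuclideanSpace ℝ (Fin d) → ℝ}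
    (hn : 0 < n) (hgrowth : ∀ ρ, 0 < ρ → μ (closedBall x ρ) ≤ ENNReal.ofReal (C₀ * ρ ^ n))
    (hf : AEMeasurable (fun y => ENNReal.ofReal |f y|) μ) (hL : lam ≤ 2 ^ L)
    (hM : Mlam μ lam f x ≠ ⊤) (hr : 0 < r) (hrR : r ≤ R) :
    ∫⁻ y, ENNReal.ofReal (phi n x r R y * |f y|) ∂μ ≤
      ENNReal.ofReal (2 ^ n) ^ (L + 1) * (ENNReal.ofReal (1 - 2 ^ (-n))⁻¹ *
        ∫⁻ y, ENNReal.ofReal (phi n x r R y) ∂μ + (L + 1) * ENNReal.ofReal C₀) *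
        Mlam μ lam f x := by
  obtain ⟨J, hJ, hJ'⟩ := exists_nat_pow_near ((one_le_div hr).2 hrR) one_lt_two
  rw [le_div_iff₀ hr] at hJ
  rw [div_lt_iff₀ hr] at hJ'
  set a : ℕ → ℝ≥0∞ := fun i => ENNReal.ofReal ((2 ^ i * r) ^ (-n)) * μ (closedBall x (2 ^ i * r))
  have hball (j : ℕ) : ENNReal.ofReal ((2 ^ j * r) ^ (-n)) *
      ∫⁻ y in closedBall x (2 ^ j * r), ENNReal.ofReal |f y| ∂μ ≤
        ENNReal.ofReal (2 ^ n) ^ L * a (j + L) * Mlam μ lam f x := by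
    have hρL : 2 ^ (j + L) * r = 2 ^ L * (2 ^ j * r) := by ring
    simp only [a, hρL]
    exact ofReal_rpow_neg_mul_setLIntegral_le_Mlam (by positivity) hL hM
      (ne_top_of_le_ne_top ofReal_ne_top (hgrowth _ (by positivity)))
  calc ∫⁻ y, ENNReal.ofReal (phi n x r R y * |f y|) ∂μ
      ≤ ENNReal.ofReal (2 ^ n) * ∑ j ∈ Finset.range (J + 1 + 1),
          ENNReal.ofReal ((2 ^ j * r) ^ (-n)) *
            ∫⁻ y in closedBall x (2 ^ j * r), ENNReal.ofReal |f y| ∂μ :=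
        lintegral_phi_mul_le hf hn hr hrR hJ'.le
    _ ≤ ENNReal.ofReal (2 ^ n) * ∑ j ∈ Finset.range (J + 1 + 1),
          ENNReal.ofReal (2 ^ n) ^ L * a (j + L) * Mlam μ lam f x :=
        mul_le_mul_right (Finset.sum_le_sum fun j _ => hball j) _
    _ = ENNReal.ofReal (2 ^ n) ^ (L + 1) * (∑ j ∈ Finset.range (J + 1 + 1), a (j + L)) *
          Mlam μ lam f x := by
        simp only [Finset.mul_sum, Finset.sum_mul]
        exact Finset.sum_congr rfl fun j _ => by ring
    _ ≤ ENNReal.ofReal (2 ^ n) ^ (L + 1) *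
          (∑ i ∈ Finset.range (J + 1), a i + (L + 1) * ENNReal.ofReal C₀) * Mlam μ lam f x := by
        gcongr
        exact sum_range_shift_le (fun i => ofReal_rpow_neg_mul_measure_closedBall_le
          (by positivity) (hgrowth _ (by positivity))) (J + 1) L
    _ ≤ _ := by
        gcongr
        exact sum_le_lintegral_phi hn hr hJ

end Integrals

theorem stmt8_general {d : ℕ} (n C₀ : ℝ) (hn : 0 < n) (hC₀ : 0 < C₀)
    (μ : Measure (EuclideanSpace ℝ (Fin d)))
    (hgrowth : ∀ (x : EuclideanSpace ℝ (Fin d)) (r : ℝ), 0 < r →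
      μ (Metric.closedBall x r) ≤ ENNReal.ofReal (C₀ * r ^ n))
    (lam : ℝ) :
    ∃ C : ℝ, 0 < C ∧ ∀ f : EuclideanSpace ℝ (Fin d) → ℝ,
      LocallyIntegrable f μ → ∀ x ∈ msupport μ,
        Nmax n μ f x ≤ ENNReal.ofReal C * Mlam μ lam f x := by
  obtain ⟨L, hL⟩ := pow_unbounded_of_one_lt lam one_lt_two
  have hc : 0 < (1 - (2 : ℝ) ^ (-n))⁻¹ :=
    inv_pos.2 (sub_pos.2 (Real.rpow_lt_one_of_one_lt_of_neg one_lt_two (neg_neg_of_pos hn)))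
  refine ⟨(2 ^ n) ^ (L + 1) * ((1 - 2 ^ (-n))⁻¹ + (L + 1) * C₀), by positivity, ?_⟩
  intro f hf x _
  by_cases hM : Mlam μ lam f x = ⊤
  · rw [hM, ENNReal.mul_top (by simp; positivity)]
    exact le_top
  simp only [Nmax, iSup_le_iff]
  intro r R hr hrR
  refine ENNReal.div_le_of_le_mul ((lintegral_phi_mul_le_Mlam hn (hgrowth x)
    hf.aestronglyMeasurable.aemeasurable.abs.ennreal_ofReal hL.le hM hr hrR.le).trans ?_)
  set Φ := ∫⁻ y, ENNReal.ofReal (phi n x r R y) ∂μ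
  have hsplit (a b : ℝ≥0∞) : a * Φ + b ≤ (a + b) * (1 + Φ) := by
    rw [mul_add, mul_one, add_mul, add_comm (a + b)]
    exact add_le_add le_self_add le_add_self
  rw [ENNReal.ofReal_mul (by positivity), ENNReal.ofReal_add hc.le (by positivity),
    ENNReal.ofReal_mul (by positivity), ENNReal.ofReal_pow (by positivity),
    ENNReal.ofReal_add (by positivity) zero_le_one, ENNReal.ofReal_natCast, ENNReal.ofReal_one]
  calc _ ≤ ENNReal.ofReal (2 ^ n) ^ (L + 1) *
        ((ENNReal.ofReal (1 - 2 ^ (-n))⁻¹ + (L + 1) * ENNReal.ofReal C₀) * (1 + Φ)) *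
        Mlam μ lam f x := by gcongr; exact hsplit _ _
    _ = _ := by ring

theorem stmt8 {d : ℕ} (n C₀ : ℝ) (hn : 0 < n) (hnd : n ≤ d) (hC₀ : 0 < C₀)
    (μ : Measure (EuclideanSpace ℝ (Fin d))) [Measure.Regular μ]
    (hgrowth : ∀ (x : EuclideanSpace ℝ (Fin d)) (r : ℝ), 0 < r →
      μ (Metric.closedBall x r) ≤ ENNReal.ofReal (C₀ * r ^ n))
    (lam : ℝ) (hlam : 1 ≤ lam) :
    ∃ C : ℝ, 0 < C ∧ ∀ f : EuclideanSpace ℝ (Fin d) → ℝ,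
      LocallyIntegrable f μ → ∀ x ∈ msupport μ,
        Nmax n μ f x ≤ ENNReal.ofReal C * Mlam μ lam f x :=
  stmt8_general n C₀ hn hC₀ μ hgrowth lam
end
end

section
/- Geometric decay of σ-measure of nested cubes: Let μ be a Radon measure on ℝ^d and σ a weight. Suppose there is an operator S with nonnegative kernel such that S(χ_{R∖Q})(y) ≥ C₁₄ > 0 for all y ∈ Q whenever Q ⊂ R are concentric cubes with R the next-scale cube, and suppose S is bounded on L^r(σ dμ) with norm ≤ B for some 1 < r < ∞. Then σ(Q) ≤ C₁₅ σ(R∖Q) with C₁₅ = (B/C₁₄)^r, and hence σ(R) ≥ (1 + C₁₅^{−1}) σ(Q); i.e. σ(Q) ≤ η σ(R) with η = (1 + C₁₅^{−1})^{−1} < 1. -/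
open MeasureTheory Set ENNReal

noncomputable section

theorem stmt15 {X : Type*} [MeasurableSpace X] (μ : Measure X)
    (σ : X → ℝ) (hσ : ∀ x, 0 ≤ σ x)
    (s : X → X → ℝ) (hs0 : ∀ x y, 0 ≤ s x y)
    (r B C₁₄ : ℝ) (hr : 1 < r) (hB : 0 < B) (hC : 0 < C₁₄)
    (Q R : Set X) (hQm : MeasurableSet Q) (hRm : MeasurableSet R) (hQR : Q ⊆ R)
    (hlow : ∀ y ∈ Q, ENNReal.ofReal C₁₄ ≤ ∫⁻ z in R \ Q, ENNReal.ofReal (s y z) ∂μ)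
    (hbound : ∀ f : X → ℝ≥0∞,
      (∫⁻ y, (∫⁻ z, ENNReal.ofReal (s y z) * f z ∂μ) ^ r * ENNReal.ofReal (σ y) ∂μ)
        ≤ ENNReal.ofReal (B ^ r) * ∫⁻ z, f z ^ r * ENNReal.ofReal (σ z) ∂μ) :
    (∫⁻ x in Q, ENNReal.ofReal (σ x) ∂μ)
        ≤ ENNReal.ofReal ((B / C₁₄) ^ r) * ∫⁻ x in R \ Q, ENNReal.ofReal (σ x) ∂μ ∧
      ENNReal.ofReal (1 + ((B / C₁₄) ^ r)⁻¹) * (∫⁻ x in Q, ENNReal.ofReal (σ x) ∂μ)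
        ≤ ∫⁻ x in R, ENNReal.ofReal (σ x) ∂μ := by
  have hr0 : (0:ℝ) < r := by linarith
  have hDm : MeasurableSet (R \ Q) := hRm.diff hQm
  set A := ∫⁻ x in Q, ENNReal.ofReal (σ x) ∂μ with hA
  set D := ∫⁻ x in R \ Q, ENNReal.ofReal (σ x) ∂μ with hD
  set f : X → ℝ≥0∞ := (R \ Q).indicator 1 with hf
  have hcr : (0:ℝ) < C₁₄ ^ r := Real.rpow_pos_of_pos hC r
  -- evaluate RHS of hbound
  have hrhs : (∫⁻ z, f z ^ r * ENNReal.ofReal (σ z) ∂μ) = D := by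
    rw [hD, ← lintegral_indicator hDm]
    refine lintegral_congr fun z => ?_
    by_cases hz : z ∈ R \ Q
    · simp [hf, Set.indicator_of_mem hz, ENNReal.one_rpow]
    · simp [hf, Set.indicator_of_notMem hz, ENNReal.zero_rpow_of_pos hr0]
  -- inner integral equals restricted integral
  have hinner : ∀ y, (∫⁻ z, ENNReal.ofReal (s y z) * f z ∂μ)
      = ∫⁻ z in R \ Q, ENNReal.ofReal (s y z) ∂μ := by
    intro y
    rw [← lintegral_indicator hDm]
    refine lintegral_congr fun z => ?_
    by_cases hz : z ∈ R \ Q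
    · simp [hf, Set.indicator_of_mem hz]
    · simp [hf, Set.indicator_of_notMem hz]
  -- lower bound the LHS of hbound
  have hlhs : ENNReal.ofReal (C₁₄ ^ r) * A
      ≤ ∫⁻ y, (∫⁻ z, ENNReal.ofReal (s y z) * f z ∂μ) ^ r * ENNReal.ofReal (σ y) ∂μ := by
    calc ENNReal.ofReal (C₁₄ ^ r) * A
        = ∫⁻ y in Q, ENNReal.ofReal (C₁₄ ^ r) * ENNReal.ofReal (σ y) ∂μ := by
          rw [hA, lintegral_const_mul' _ _ (by simp)]
      _ ≤ ∫⁻ y in Q, (∫⁻ z, ENNReal.ofReal (s y z) * f z ∂μ) ^ r * ENNReal.ofReal (σ y) ∂μ := by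
          refine setLIntegral_mono' hQm fun y hy => ?_
          gcongr
          rw [← ENNReal.ofReal_rpow_of_pos hC, hinner y]
          exact ENNReal.rpow_le_rpow (hlow y hy) hr0.le
      _ ≤ _ := setLIntegral_le_lintegral _ _
  have key : ENNReal.ofReal (C₁₄ ^ r) * A ≤ ENNReal.ofReal (B ^ r) * D := by
    calc ENNReal.ofReal (C₁₄ ^ r) * A ≤ _ := hlhs
      _ ≤ ENNReal.ofReal (B ^ r) * ∫⁻ z, f z ^ r * ENNReal.ofReal (σ z) ∂μ := hbound f
      _ = ENNReal.ofReal (B ^ r) * D := by rw [hrhs]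
  have hc0 : (0:ℝ) < (B / C₁₄) ^ r := Real.rpow_pos_of_pos (div_pos hB hC) r
  have hkne : ENNReal.ofReal (C₁₄ ^ r) ≠ 0 := by
    simp [ENNReal.ofReal_eq_zero, not_le, hcr]
  have hpart1 : A ≤ ENNReal.ofReal ((B / C₁₄) ^ r) * D := by
    have hdiv : ENNReal.ofReal ((B / C₁₄) ^ r)
        = (ENNReal.ofReal (C₁₄ ^ r))⁻¹ * ENNReal.ofReal (B ^ r) := by
      rw [Real.div_rpow hB.le hC.le, ← ENNReal.ofReal_inv_of_pos hcr,
        ← ENNReal.ofReal_mul (by positivity)]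
      ring_nf
    calc A = (ENNReal.ofReal (C₁₄ ^ r))⁻¹ * (ENNReal.ofReal (C₁₄ ^ r) * A) := by
          rw [← mul_assoc, ENNReal.inv_mul_cancel hkne (by simp), one_mul]
      _ ≤ (ENNReal.ofReal (C₁₄ ^ r))⁻¹ * (ENNReal.ofReal (B ^ r) * D) := by gcongr
      _ = ENNReal.ofReal ((B / C₁₄) ^ r) * D := by rw [hdiv, mul_assoc]
  refine ⟨hpart1, ?_⟩
  have hsplit : (∫⁻ x in R, ENNReal.ofReal (σ x) ∂μ) = A + D := by
    rw [hA, hD, ← lintegral_union hDm disjoint_sdiff_right, Set.union_diff_cancel hQR]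
  have hinv : ENNReal.ofReal (((B / C₁₄) ^ r)⁻¹) * A ≤ D := by
    calc ENNReal.ofReal (((B / C₁₄) ^ r)⁻¹) * A
        ≤ ENNReal.ofReal (((B / C₁₄) ^ r)⁻¹) * (ENNReal.ofReal ((B / C₁₄) ^ r) * D) := by
          gcongr
      _ = ENNReal.ofReal (((B / C₁₄) ^ r)⁻¹ * (B / C₁₄) ^ r) * D := by
          rw [← mul_assoc, ← ENNReal.ofReal_mul (by positivity)]
      _ = D := by rw [inv_mul_cancel₀ hc0.ne', ENNReal.ofReal_one, one_mul]
  rw [hsplit, ENNReal.ofReal_add zero_le_one (by positivity), add_mul, ENNReal.ofReal_one, one_mul]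
  exact add_le_add le_rfl hinv
end
end

section
/- Principal cubes maximal bound: Let σ be a measure, f ≥ 0 σ-integrable locally, and let Γ be a countable family of cubes with the property that for each point x and each (t,u) ∈ Γ with x ∈ Q^t_u, the numbers T^t_u := σ(2Q^t_u)^{−1} ∫_{Q^t_u} f dμ satisfy: whenever Q^k_i ⊊ Q^t_u with both in Γ then T^k_i > 2 T^t_u. Then for every x, Σ_{(t,u)∈Γ : x∈Q^t_u} (T^t_u)^{p−1} ≤ C_p (sup_{(t,u)∈Γ : x∈Q^t_u} T^t_u)^{p−1} for p > 1, with C_p = Σ_{j≥0} 2^{−j(p−1)} = (1 − 2^{1−p})^{−1}; consequently Σ_{(t,u)∈Γ} (T^t_u)^{p−1} m_{σ,Q^t_u}(g) χ_{Q^t_u}(x) ≤ C_p (M^d_σ g(x)) · (sup_{(t,u)∈Γ:x∈Q^t_u} T^t_u)^{p−1} for any g ≥ 0, where m_{σ,Q}(g) = σ(Q)^{−1} ∫_Q g σ dμ and M^d_σ is the dyadic maximal operator with respect to σ. -/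
/-!
Along the chain of cubes of `Γ` containing `x`, each cube's value exceeds twice that of any
larger one. So the largest value `T` dominates, all the others are at most `T / 2`, and
inductively the `j`-th largest is at most `2⁻ʲ T`: the sum of the `(p - 1)`-th powers is bounded by
the geometric series `∑ 2^{-j(p-1)} T^{p-1}`. The second bound follows by pulling out the
supremum of the averages.
-/

open MeasureTheory Set ENNReal

def Lacunary {ι : Type*} (T : ι → ℝ≥0∞) : Prop :=
  Pairwise fun i j => 2 * T j < T i ∨ 2 * T i < T j

lemma ENNReal.one_add_ofReal_mul_ofReal_inv_one_sub {ρ : ℝ} (hρ₀ : 0 ≤ ρ) (hρ₁ : ρ < 1) :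
    1 + ENNReal.ofReal ρ * ENNReal.ofReal (1 - ρ)⁻¹ = ENNReal.ofReal (1 - ρ)⁻¹ := by
  have hc : 0 ≤ (1 - ρ)⁻¹ := inv_nonneg.mpr (by linarith)
  rw [← ENNReal.ofReal_mul hρ₀, ← ENNReal.ofReal_one,
    ← ENNReal.ofReal_add zero_le_one (mul_nonneg hρ₀ hc)]
  congr 1
  linear_combination -inv_mul_cancel₀ (sub_ne_zero.mpr hρ₁.ne')

lemma ENNReal.div_two_rpow {q : ℝ} (hq : 0 ≤ q) (t : ℝ≥0∞) :
    (t / 2) ^ q = ENNReal.ofReal (2 ^ (-q)) * t ^ q := by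
  rw [ENNReal.div_rpow_of_nonneg _ _ hq, div_eq_mul_inv, ← ENNReal.rpow_neg, mul_comm,
    ← ENNReal.ofReal_rpow_of_pos two_pos, ENNReal.ofReal_ofNat]

lemma Lacunary.le_half_of_ne {ι : Type*} {T : ι → ℝ≥0∞} (hT : Lacunary T) {i j : ι}
    (hij : i ≠ j) (hle : T i ≤ T j) : T i ≤ T j / 2 := by
  rcases hT hij with h | h
  · exact absurd (hle.trans (le_mul_of_one_le_left' one_le_two)) h.not_ge
  · rw [ENNReal.le_div_iff_mul_le (Or.inl two_ne_zero) (Or.inl ofNat_ne_top), mul_comm]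
    exact h.le

lemma Lacunary.sum_rpow_le {ι : Type*} {T : ι → ℝ≥0∞} (hT : Lacunary T) {p : ℝ} (hp : 1 < p)
    (F : Finset ι) {b : ℝ≥0∞} (hb : ∀ i ∈ F, T i ≤ b) :
    ∑ i ∈ F, T i ^ (p - 1) ≤ ENNReal.ofReal ((1 - 2 ^ (1 - p))⁻¹) * b ^ (p - 1) := by
  classical
  induction F using Finset.strongInduction generalizing b with
  | H F ih =>
  rcases F.eq_empty_or_nonempty with rfl | hF
  · simp
  obtain ⟨m, hm, hmax⟩ := F.exists_max_image T hF
  have hrest := ih (F.erase m) (F.erase_ssubset hm) (b := T m / 2)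
    fun i hi => hT.le_half_of_ne (Finset.ne_of_mem_erase hi) (hmax i (Finset.mem_of_mem_erase hi))
  rw [ENNReal.div_two_rpow (by linarith), neg_sub] at hrest
  calc ∑ i ∈ F, T i ^ (p - 1)
      = T m ^ (p - 1) + ∑ i ∈ F.erase m, T i ^ (p - 1) := (F.add_sum_erase _ hm).symm
    _ ≤ T m ^ (p - 1) + ENNReal.ofReal ((1 - 2 ^ (1 - p))⁻¹) *
          (ENNReal.ofReal (2 ^ (1 - p)) * T m ^ (p - 1)) := by gcongr
    _ = ENNReal.ofReal ((1 - 2 ^ (1 - p))⁻¹) * T m ^ (p - 1) := by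
      conv_rhs => rw [← ENNReal.one_add_ofReal_mul_ofReal_inv_one_sub (by positivity)
        (Real.rpow_lt_one_of_one_lt_of_neg one_lt_two (by linarith))]
      ring
    _ ≤ ENNReal.ofReal ((1 - 2 ^ (1 - p))⁻¹) * b ^ (p - 1) := by
      gcongr; exact hb m hm

lemma Lacunary.tsum_rpow_le {ι : Type*} {T : ι → ℝ≥0∞} (hT : Lacunary T) {p : ℝ} (hp : 1 < p) :
    ∑' i, T i ^ (p - 1) ≤ ENNReal.ofReal ((1 - 2 ^ (1 - p))⁻¹) * (⨆ i, T i) ^ (p - 1) := by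
  rw [ENNReal.tsum_eq_iSup_sum]
  exact iSup_le fun F => hT.sum_rpow_le hp F fun i _ => le_iSup T i

lemma ENNReal.tsum_mul_le_tsum_mul_iSup {ι : Type*} (a b : ι → ℝ≥0∞) :
    ∑' i, a i * b i ≤ (∑' i, a i) * ⨆ i, b i := by
  rw [← ENNReal.tsum_mul_right]
  exact ENNReal.tsum_le_tsum fun i => mul_le_mul_right (le_iSup b i) _

lemma lacunary_of_nested {X ι : Type*} {Q : ι → Set X} {T : ι → ℝ≥0∞}
    (hinj : Function.Injective Q)
    (hchain : ∀ i j (x : X), x ∈ Q i → x ∈ Q j → Q i ⊆ Q j ∨ Q j ⊆ Q i)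
    (hgap : ∀ i j, Q i ⊂ Q j → 2 * T j < T i) (x : X) :
    Lacunary fun i : {i // x ∈ Q i} => T i.1 := by
  intro i j hij
  have hQ : Q i.1 ≠ Q j.1 := hinj.ne (Subtype.coe_ne_coe.mpr hij)
  rcases hchain i.1 j.1 x i.2 j.2 with h | h
  · exact Or.inl (hgap _ _ (h.ssubset_of_ne hQ))
  · exact Or.inr (hgap _ _ (h.ssubset_of_ne hQ.symm))

theorem stmt18_general {X : Type*} [MeasurableSpace X] (μ : Measure X)
    (σ g : X → ℝ≥0∞) {ι : Type*}
    (Q : ι → Set X) (T : ι → ℝ≥0∞) (p : ℝ) (hp : 1 < p)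
    (hinj : Function.Injective Q)
    (hchain : ∀ i j (x : X), x ∈ Q i → x ∈ Q j → Q i ⊆ Q j ∨ Q j ⊆ Q i)
    (hgap : ∀ i j, Q i ⊂ Q j → 2 * T j < T i) :
    (∀ x : X, ∑' i : {i // x ∈ Q i}, T i.1 ^ (p - 1)
        ≤ ENNReal.ofReal ((1 - 2 ^ (1 - p))⁻¹) *
            (⨆ i : {i // x ∈ Q i}, T i.1) ^ (p - 1)) ∧
      ∀ x : X, ∑' i : {i // x ∈ Q i},
          T i.1 ^ (p - 1) *
            ((∫⁻ y in Q i.1, g y * σ y ∂μ) / ∫⁻ y in Q i.1, σ y ∂μ)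
        ≤ ENNReal.ofReal ((1 - 2 ^ (1 - p))⁻¹) *
            (⨆ i : {i // x ∈ Q i},
              (∫⁻ y in Q i.1, g y * σ y ∂μ) / ∫⁻ y in Q i.1, σ y ∂μ) *
            (⨆ i : {i // x ∈ Q i}, T i.1) ^ (p - 1) := by
  have hsum x := (lacunary_of_nested hinj hchain hgap x).tsum_rpow_le hp
  refine ⟨hsum, fun x => ?_⟩
  calc _ ≤ _ := ENNReal.tsum_mul_le_tsum_mul_iSup _ _
    _ ≤ _ := mul_le_mul_left (hsum x) _
    _ = _ := mul_right_comm _ _ _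

theorem stmt18 {X : Type*} [MeasurableSpace X] (μ : Measure X)
    (σ g : X → ℝ≥0∞) {ι : Type*} [Countable ι]
    (Q : ι → Set X) (T : ι → ℝ≥0∞) (p : ℝ) (hp : 1 < p)
    (hinj : Function.Injective Q)
    (hchain : ∀ i j (x : X), x ∈ Q i → x ∈ Q j → Q i ⊆ Q j ∨ Q j ⊆ Q i)
    (hgap : ∀ i j, Q i ⊂ Q j → 2 * T j < T i) :
    (∀ x : X, ∑' i : {i // x ∈ Q i}, T i.1 ^ (p - 1)
        ≤ ENNReal.ofReal ((1 - 2 ^ (1 - p))⁻¹) *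
            (⨆ i : {i // x ∈ Q i}, T i.1) ^ (p - 1)) ∧
      ∀ x : X, ∑' i : {i // x ∈ Q i},
          T i.1 ^ (p - 1) *
            ((∫⁻ y in Q i.1, g y * σ y ∂μ) / ∫⁻ y in Q i.1, σ y ∂μ)
        ≤ ENNReal.ofReal ((1 - 2 ^ (1 - p))⁻¹) *
            (⨆ i : {i // x ∈ Q i},
              (∫⁻ y in Q i.1, g y * σ y ∂μ) / ∫⁻ y in Q i.1, σ y ∂μ) *
            (⨆ i : {i // x ∈ Q i}, T i.1) ^ (p - 1) :=
  stmt18_general μ σ g Q T p hp hinj hchain hgap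
end
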